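/- arXiv:1412.3216 — 4 statements merged into one kernel-verified Lean document; each statement's English description precedes it below -/
import Mathlib

section
/- Let λ ∈ ℂ[T] be non-constant, u a root of X² - λX + 1 over ℂ(T) (not lying in ℂ(T)), and 𝒪 = ℂ[T][u] = ℂ[T] ⊕ ℂ[T]·u. Then the unit group of 𝒪 equals { c·uⁿ : c ∈ ℂ^×, n ∈ ℤ }. -/
/-! The norm `N(a + b u) = a² + λab + b²` is multiplicative and coordinates with respect to
`1, u` are unique (as `u ∉ ℂ(T)`), so a unit of `𝒪` has a unit of `ℂ[T]`, i.e. a nonzero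
constant, as its norm. Conversely, if `a² + λab + b²` is constant with `a, b ≠ 0`, comparing
degrees (`deg λ > 0`) shows that, say, `deg b < deg a` and `deg (a + λb) < deg a`, so
`(a + b u) u = -b + (a + λb) u` has smaller total degree. Descending this way ends at an element
`c` or `c u` with `c ∈ ℂ`, hence every unit is `c uⁿ`. -/

open Polynomial

-- the norm of `a + b u` for a root `u` of `X² - lX + 1`: its conjugate is `l - u = u⁻¹`
def quadNorm {R : Type*} [CommRing R] (l a b : R) : R := a ^ 2 + l * a * b + b ^ 2

section QuadNorm

variable {R : Type*} [CommRing R]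

theorem quadNorm_comm (l a b : R) : quadNorm l a b = quadNorm l b a := by
  unfold quadNorm; ring

theorem quadNorm_neg_add_mul (l a b : R) : quadNorm l (-b) (a + l * b) = quadNorm l a b := by
  unfold quadNorm; ring

theorem quadNorm_mul (l a b p q : R) :
    quadNorm l a b * quadNorm l p q = quadNorm l (a * p - b * q) (a * q + b * p + l * b * q) := by
  unfold quadNorm; ring

theorem quadNorm_one_zero (l : R) : quadNorm l 1 0 = 1 := by
  unfold quadNorm; ring

end QuadNorm

theorem Polynomial.natDegree_add_mul_lt_of_natDegree_quadNorm_eq_zero {R : Type*} [CommRing R]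
    [IsDomain R] {l a b : R[X]} (hl : 0 < l.natDegree) (ha : a ≠ 0) (hb : b ≠ 0)
    (hba : b.natDegree ≤ a.natDegree) (h : (quadNorm l a b).natDegree = 0) :
    (a + l * b).natDegree < a.natDegree := by
  have hlab : (l * a * b).natDegree = l.natDegree + a.natDegree + b.natDegree := by
    rw [natDegree_mul (mul_ne_zero (ne_zero_of_natDegree_gt hl) ha) hb,
      natDegree_mul (ne_zero_of_natDegree_gt hl) ha]
  have hb_lt : b.natDegree < a.natDegree := by
    refine hba.lt_of_ne fun hab => ?_
    -- for `deg a = deg b` the middle term `l a b` has the largest degree on its own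
    have hlt : (a ^ 2 + b ^ 2).natDegree < (l * a * b).natDegree := by
      refine (natDegree_add_le _ _).trans_lt ?_
      rw [natDegree_pow, natDegree_pow, hlab]; omega
    rw [show quadNorm l a b = a ^ 2 + b ^ 2 + l * a * b by unfold quadNorm; ring,
      natDegree_add_eq_right_of_natDegree_lt hlt] at h
    omega
  by_contra! hge
  have hne : a + l * b ≠ 0 := by
    rintro hz; rw [hz, natDegree_zero] at hge; omega
  have hlt : (b ^ 2).natDegree < (a * (a + l * b)).natDegree := by
    rw [natDegree_pow, natDegree_mul ha hne]; omega
  rw [show quadNorm l a b = a * (a + l * b) + b ^ 2 by unfold quadNorm; ring,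
    natDegree_add_eq_left_of_natDegree_lt hlt, natDegree_mul ha hne] at h
  omega

theorem Polynomial.natDegree_eq_zero_of_natDegree_sq_eq_zero {R : Type*} [CommRing R]
    [NoZeroDivisors R] {a : R[X]} (h : (a ^ 2).natDegree = 0) : a.natDegree = 0 := by
  rw [natDegree_pow] at h; omega

section QuadraticElement

variable {R K : Type*} [CommRing R] [Field K] {φ : R[X] →+* K} {l : R[X]} {u : K}

theorem mul_sub_eq_one_of_sq_sub_mul_add_one_eq_zero {t : K} (hu : u ^ 2 - t * u + 1 = 0) :
    u * (t - u) = 1 := by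
  linear_combination -hu

theorem ne_zero_of_sq_sub_mul_add_one_eq_zero {t : K} (hu : u ^ 2 - t * u + 1 = 0) : u ≠ 0 :=
  left_ne_zero_of_mul_eq_one (mul_sub_eq_one_of_sq_sub_mul_add_one_eq_zero hu)

theorem add_mul_mul_self (hu : u ^ 2 - φ l * u + 1 = 0) (a b : R[X]) :
    (φ a + φ b * u) * u = φ (-b) + φ (a + l * b) * u := by
  simp only [map_add, map_mul, map_neg]
  linear_combination φ b * hu

theorem add_mul_mul_inv (hu : u ^ 2 - φ l * u + 1 = 0) (a b : R[X]) :
    (φ a + φ b * u) * u⁻¹ = φ (l * a + b) + φ (-a) * u := by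
  rw [inv_eq_of_mul_eq_one_right (mul_sub_eq_one_of_sq_sub_mul_add_one_eq_zero hu)]
  simp only [map_add, map_mul, map_neg]
  linear_combination -φ b * hu

theorem exists_eq_C_mul_zpow_of_natDegree_quadNorm_eq_zero [IsDomain R]
    (hl : 0 < l.natDegree) (hu : u ^ 2 - φ l * u + 1 = 0) (a b : R[X])
    (h : (quadNorm l a b).natDegree = 0) :
    ∃ x : R, ∃ n : ℤ, φ a + φ b * u = φ (C x) * u ^ n := by
  have hu0 := ne_zero_of_sq_sub_mul_add_one_eq_zero hu
  by_cases hb : b = 0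
  · subst hb
    have ha : a.natDegree = 0 :=
      natDegree_eq_zero_of_natDegree_sq_eq_zero (by simpa [quadNorm] using h)
    exact ⟨a.coeff 0, 0, by rw [← eq_C_of_natDegree_eq_zero ha]; simp⟩
  by_cases ha : a = 0
  · subst ha
    have hb : b.natDegree = 0 :=
      natDegree_eq_zero_of_natDegree_sq_eq_zero (by simpa [quadNorm] using h)
    exact ⟨b.coeff 0, 1, by rw [← eq_C_of_natDegree_eq_zero hb]; simp⟩
  rcases le_or_gt b.natDegree a.natDegree with hba | hab
  · have hdeg := natDegree_add_mul_lt_of_natDegree_quadNorm_eq_zero hl ha hb hba h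
    obtain ⟨x, n, hx⟩ := exists_eq_C_mul_zpow_of_natDegree_quadNorm_eq_zero hl hu
      (-b) (a + l * b) (by rwa [quadNorm_neg_add_mul])
    refine ⟨x, n - 1, ?_⟩
    rw [zpow_sub_one₀ hu0, ← mul_assoc, ← div_eq_mul_inv, ← hx, ← add_mul_mul_self hu,
      mul_div_cancel_right₀ _ hu0]
  · have hdeg : (l * a + b).natDegree < b.natDegree := by
      rw [add_comm]
      exact natDegree_add_mul_lt_of_natDegree_quadNorm_eq_zero hl hb ha hab.le
        (by rwa [quadNorm_comm])
    obtain ⟨x, n, hx⟩ := exists_eq_C_mul_zpow_of_natDegree_quadNorm_eq_zero hl hu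
      (l * a + b) (-a) (by rwa [quadNorm_comm, add_comm, quadNorm_neg_add_mul, quadNorm_comm])
    refine ⟨x, n + 1, ?_⟩
    rw [zpow_add_one₀ hu0, ← mul_assoc, ← hx, ← add_mul_mul_inv hu,
      inv_mul_cancel_right₀ hu0]
termination_by a.natDegree + b.natDegree
decreasing_by all_goals simp only [natDegree_neg]; omega

theorem mem_closure_range_union_singleton_iff (hu : u ^ 2 - φ l * u + 1 = 0) {θ : K} :
    θ ∈ Subring.closure (Set.range φ ∪ {u}) ↔ ∃ a b : R[X], θ = φ a + φ b * u := by
  refine ⟨fun hθ => ?_, ?_⟩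
  · induction hθ using Subring.closure_induction with
    | mem x hx =>
      rcases hx with ⟨p, rfl⟩ | rfl
      exacts [⟨p, 0, by simp⟩, ⟨0, 1, by simp⟩]
    | zero => exact ⟨0, 0, by simp⟩
    | one => exact ⟨1, 0, by simp⟩
    | add x y _ _ hx hy =>
      obtain ⟨⟨a, b, rfl⟩, ⟨p, q, rfl⟩⟩ := And.intro hx hy
      exact ⟨a + p, b + q, by simp only [map_add]; ring⟩
    | neg x _ hx =>
      obtain ⟨a, b, rfl⟩ := hx
      exact ⟨-a, -b, by simp only [map_neg]; ring⟩
    | mul x y _ _ hx hy =>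
      obtain ⟨⟨a, b, rfl⟩, ⟨p, q, rfl⟩⟩ := And.intro hx hy
      refine ⟨a * p - b * q, a * q + b * p + l * b * q, ?_⟩
      simp only [map_add, map_mul, map_sub]
      linear_combination φ b * φ q * hu
  · rintro ⟨a, b, rfl⟩
    exact add_mem (Subring.subset_closure (.inl ⟨a, rfl⟩))
      (mul_mem (Subring.subset_closure (.inl ⟨b, rfl⟩)) (Subring.subset_closure (.inr rfl)))

theorem zpow_mem_closure_range_union_singleton (hu : u ^ 2 - φ l * u + 1 = 0) (n : ℤ) :
    u ^ n ∈ Subring.closure (Set.range φ ∪ {u}) := by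
  have hu0 := ne_zero_of_sq_sub_mul_add_one_eq_zero hu
  have hu_mem : u ∈ Subring.closure (Set.range φ ∪ {u}) := Subring.subset_closure (.inr rfl)
  induction n using Int.induction_on with
  | zero => simp [one_mem]
  | succ n ih => rw [zpow_add_one₀ hu0]; exact mul_mem ih hu_mem
  | pred n ih =>
    rw [zpow_sub_one₀ hu0, inv_eq_of_mul_eq_one_right
      (mul_sub_eq_one_of_sq_sub_mul_add_one_eq_zero hu)]
    exact mul_mem ih (sub_mem (Subring.subset_closure (.inl ⟨l, rfl⟩)) hu_mem)

theorem eq_and_eq_of_add_mul_eq_add_mul {L : Subfield K} (hφ : Function.Injective φ)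
    (hφL : ∀ p, φ p ∈ L) (hu : u ∉ L) {a b p q : R[X]}
    (h : φ a + φ b * u = φ p + φ q * u) :
    a = p ∧ b = q := by
  obtain rfl : b = q := by
    by_contra hbq
    have hne : φ q - φ b ≠ 0 := sub_ne_zero.2 (hφ.ne (Ne.symm hbq))
    refine hu ?_
    rw [show u = (φ a - φ p) / (φ q - φ b) by field_simp; linear_combination -h]
    exact div_mem (sub_mem (hφL a) (hφL p)) (sub_mem (hφL q) (hφL b))
  exact ⟨hφ (add_right_cancel h), rfl⟩

theorem isUnit_quadNorm_of_mul_eq_one {L : Subfield K} (hφ : Function.Injective φ)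
    (hφL : ∀ p, φ p ∈ L) (huL : u ∉ L) (hu : u ^ 2 - φ l * u + 1 = 0) {a b p q : R[X]}
    (h : (φ a + φ b * u) * (φ p + φ q * u) = 1) : IsUnit (quadNorm l a b) := by
  have hprod : (φ a + φ b * u) * (φ p + φ q * u) =
      φ (a * p - b * q) + φ (a * q + b * p + l * b * q) * u := by
    simp only [map_add, map_mul, map_sub]
    linear_combination φ b * φ q * hu
  obtain ⟨h1, h2⟩ := eq_and_eq_of_add_mul_eq_add_mul hφ hφL huL
    (hprod.symm.trans (h.trans (by simp : (1 : K) = φ 1 + φ 0 * u)))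
  exact IsUnit.of_mul_eq_one (quadNorm l p q)
    (by rw [quadNorm_mul, h1, h2, quadNorm_one_zero])

end QuadraticElement

/-- The unit group of 𝒪 = ℂ[T][u] is { c·uⁿ : c ∈ ℂˣ, n ∈ ℤ }, where u is a root
of X² - λX + 1 not lying in ℂ(T). -/
theorem stmt_3 (l : Polynomial ℂ) (hl : 0 < l.natDegree)
    (K : Type*) [Field K] [Algebra (RatFunc ℂ) K]
    (φ : Polynomial ℂ →+* K)
    (hφ : φ = (algebraMap (RatFunc ℂ) K).comp (algebraMap (Polynomial ℂ) (RatFunc ℂ)))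
    (u : K) (hu : u ^ 2 - φ l * u + 1 = 0)
    (hu' : u ∉ Set.range (algebraMap (RatFunc ℂ) K))
    (O : Subring K) (hO : O = Subring.closure (Set.range φ ∪ {u})) :
    ∀ θ : K, (θ ∈ O ∧ ∃ θ' ∈ O, θ * θ' = 1) ↔
      ∃ c : ℂ, c ≠ 0 ∧ ∃ n : ℤ, θ = φ (Polynomial.C c) * u ^ n := by
  subst hO
  have hφ_inj : Function.Injective φ :=
    hφ ▸ (algebraMap (RatFunc ℂ) K).injective.comp
      (IsFractionRing.injective ℂ[X] (RatFunc ℂ))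
  have hφ_mem : ∀ p, φ p ∈ (algebraMap (RatFunc ℂ) K).fieldRange :=
    fun p => hφ ▸ RingHom.mem_fieldRange_self _ _
  have hu_not_mem : u ∉ (algebraMap (RatFunc ℂ) K).fieldRange := by
    rwa [← SetLike.mem_coe, RingHom.coe_fieldRange]
  intro θ
  constructor
  · rintro ⟨hθ, θ', hθ', hθθ'⟩
    obtain ⟨a, b, rfl⟩ := (mem_closure_range_union_singleton_iff hu).1 hθ
    obtain ⟨p, q, rfl⟩ := (mem_closure_range_union_singleton_iff hu).1 hθ'
    obtain ⟨c, -, hc⟩ :=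
      Polynomial.isUnit_iff.1 (isUnit_quadNorm_of_mul_eq_one hφ_inj hφ_mem hu_not_mem hu hθθ')
    obtain ⟨x, n, hx⟩ := exists_eq_C_mul_zpow_of_natDegree_quadNorm_eq_zero hl hu a b
      (by rw [← hc, natDegree_C])
    refine ⟨x, ?_, n, hx⟩
    rintro rfl
    simp [hx] at hθθ'
  · rintro ⟨c, hc, n, rfl⟩
    have hu0 := ne_zero_of_sq_sub_mul_add_one_eq_zero hu
    have hC_mem (c : ℂ) : φ (C c) ∈ Subring.closure (Set.range φ ∪ {u}) :=
      Subring.subset_closure (.inl ⟨C c, rfl⟩)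
    refine ⟨mul_mem (hC_mem c) (zpow_mem_closure_range_union_singleton hu n),
      φ (C c⁻¹) * u ^ (-n),
      mul_mem (hC_mem _) (zpow_mem_closure_range_union_singleton hu _), ?_⟩
    rw [mul_mul_mul_comm, ← map_mul, ← C_mul, mul_inv_cancel₀ hc, ← zpow_add₀ hu0,
      add_neg_cancel, C_1, map_one, zpow_zero, one_mul]
end

section
/- Let f ∈ ℂ[X] be a nonzero polynomial of even degree and λ ∈ ℂ[T] a non-constant polynomial. If f(λ) is a square in ℂ(T), then f is a square in ℂ[X]. -/
/-!
A square in `ℂ(T)` that lies in `ℂ[T]` is already a square there, so `f(λ)` is a square in `ℂ[T]`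
and all its root multiplicities are even. At a point `t` the multiplicity of `f(λ)` is
`m_a(f) · ord_t(λ - a)` with `a = λ(t)`, so for each root `a` of `f` of odd multiplicity every root
of `λ - a` has even multiplicity, i.e. `λ - a` is a square. For non-constant `λ` this happens for
at most one `a`, since `λ - a = p²` and `λ - b = q²` give `(p - q)(p + q) = b - a`. As the root
multiplicities of `f` add up to the even degree of `f`, no root has odd multiplicity.
-/

open Polynomial

theorem IsIntegrallyClosed.isSquare_of_isSquare_algebraMap {R K : Type*} [CommRing R]
    [IsIntegrallyClosed R] [CommRing K] [Algebra R K] [IsFractionRing R K] {r : R}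
    (h : IsSquare (algebraMap R K r)) : IsSquare r := by
  obtain ⟨g, hg⟩ := h
  obtain ⟨y, rfl⟩ := exists_algebraMap_eq_of_isIntegral_pow (R := R) (K := K) two_pos
    (by rw [sq, ← hg]; exact isIntegral_algebraMap)
  exact ⟨y, IsFractionRing.injective R K (by rw [hg, map_mul])⟩

theorem Multiset.even_count_of_even_card {α : Type*} [DecidableEq α] {s : Multiset α}
    (hs : Even (card s)) (h : {a | Odd (s.count a)}.Subsingleton) (a : α) :
    Even (s.count a) := by
  by_contra ha
  rw [Nat.not_even_iff_odd] at ha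
  have has : a ∈ s.toFinset := Multiset.mem_toFinset.mpr (Multiset.count_pos.mp ha.pos)
  have hrest : Even (∑ b ∈ s.toFinset.erase a, s.count b) :=
    Finset.even_sum _ fun b hb => Nat.not_odd_iff_even.mp fun hodd =>
      Finset.ne_of_mem_erase hb (h hodd ha)
  rw [← Multiset.toFinset_sum_count_eq, ← Finset.add_sum_erase _ _ has] at hs
  exact Nat.not_even_iff_odd.mpr (ha.add_even hrest) hs

namespace Polynomial

section Domain

variable {R : Type*} [CommRing R] [IsDomain R]

theorem rootMultiplicity_pow (p : R[X]) (n : ℕ) (t : R) :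
    (p ^ n).rootMultiplicity t = n * p.rootMultiplicity t := by
  classical
  rw [← count_roots, ← count_roots, roots_pow, Multiset.count_nsmul]

theorem _root_.IsSquare.even_rootMultiplicity {p : R[X]} (hp : IsSquare p) (t : R) :
    Even (p.rootMultiplicity t) := by
  obtain ⟨r, rfl⟩ := hp
  rw [← sq, rootMultiplicity_pow]
  exact even_two_mul _

theorem rootMultiplicity_comp (f l : R[X]) (t : R) :
    (f.comp l).rootMultiplicity t =
      f.rootMultiplicity (l.eval t) * (l - C (l.eval t)).rootMultiplicity t := by
  set a := l.eval t
  rcases eq_or_ne f 0 with rfl | hf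
  · simp
  rcases eq_or_ne (l - C a) 0 with hla | hla
  · rw [hla, sub_eq_zero.mp hla, comp_C, rootMultiplicity_C, rootMultiplicity_zero, mul_zero]
  set g := f /ₘ (X - C a) ^ f.rootMultiplicity a
  have hf_eq : f = (X - C a) ^ f.rootMultiplicity a * g :=
    (pow_mul_divByMonic_rootMultiplicity_eq f a).symm
  have hfac : f.comp l = (l - C a) ^ f.rootMultiplicity a * g.comp l := by
    conv_lhs => rw [hf_eq]
    simp only [mul_comp, pow_comp, sub_comp, X_comp, C_comp]
  have hg : ¬(g.comp l).IsRoot t := by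
    rw [IsRoot, eval_comp]
    exact eval_divByMonic_pow_rootMultiplicity_ne_zero a hf
  have hg0 : g.comp l ≠ 0 := fun h => hg (by simp [h])
  rw [hfac, rootMultiplicity_mul (mul_ne_zero (pow_ne_zero _ hla) hg0), rootMultiplicity_pow,
    rootMultiplicity_eq_zero hg, add_zero]

end Domain

section Field

variable {K : Type*} [Field K]

theorem eq_of_isSquare_sub_C [NeZero (2 : K)] {l : K[X]} (hl : 0 < l.natDegree) {a b : K}
    (ha : IsSquare (l - C a)) (hb : IsSquare (l - C b)) : a = b := by
  by_contra hab
  obtain ⟨p, hp⟩ := ha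
  obtain ⟨q, hq⟩ := hb
  have hdiff : (p - q) * (p + q) = C (b - a) := by
    rw [C_sub]; linear_combination hq - hp
  have hunit : IsUnit ((p - q) * (p + q)) :=
    hdiff ▸ isUnit_C.mpr (sub_ne_zero.mpr (Ne.symm hab)).isUnit
  obtain ⟨u, -, hu⟩ := isUnit_iff.mp (isUnit_of_mul_isUnit_left hunit)
  obtain ⟨v, -, hv⟩ := isUnit_iff.mp (isUnit_of_mul_isUnit_right hunit)
  have hpC : p = C ((u + v) / 2) := by
    have h2p : C 2 * p = C (u + v) := by rw [C_add, hu, hv, C_ofNat]; ring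
    rw [div_eq_inv_mul, C_mul, ← h2p, ← mul_assoc, ← C_mul, inv_mul_cancel₀ two_ne_zero, C_1,
      one_mul]
  have hlC : l = C ((u + v) / 2 * ((u + v) / 2) + a) := by
    rw [C_add, C_mul, ← hpC, ← hp, sub_add_cancel]
  rw [hlC, natDegree_C] at hl
  exact hl.false

variable [IsAlgClosed K]

theorem isSquare_of_forall_even_rootMultiplicity {p : K[X]}
    (h : ∀ a, Even (p.rootMultiplicity a)) : IsSquare p := by
  classical
  obtain ⟨d, hd⟩ := IsAlgClosed.exists_pow_nat_eq p.leadingCoeff two_pos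
  refine ⟨C d * ∏ a ∈ p.roots.toFinset, (X - C a) ^ (p.roots.count a / 2), ?_⟩
  rw [← sq, mul_pow, ← C_pow, hd, ← Finset.prod_pow]
  conv_lhs => rw [(IsAlgClosed.splits p).eq_prod_roots, Finset.prod_multiset_map_count]
  congr 1
  refine Finset.prod_congr rfl fun a _ => ?_
  rw [← pow_mul, Nat.div_mul_cancel (count_roots p ▸ h a).two_dvd]

theorem isSquare_sub_C_of_isSquare_comp {f l : K[X]} {a : K} (hsq : IsSquare (f.comp l))
    (hodd : Odd (f.rootMultiplicity a)) : IsSquare (l - C a) := by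
  refine isSquare_of_forall_even_rootMultiplicity fun t => ?_
  by_cases ht : l.eval t = a
  · have heven := hsq.even_rootMultiplicity t
    rw [rootMultiplicity_comp, ht] at heven
    exact (Nat.even_mul.mp heven).resolve_left (Nat.not_even_iff_odd.mpr hodd)
  · rw [rootMultiplicity_eq_zero (by simpa [sub_eq_zero] using ht)]
    exact Even.zero

end Field

end Polynomial

theorem stmt_7_general (f : Polynomial ℂ) (hev : Even f.natDegree)
    (l : Polynomial ℂ) (hl : 0 < l.natDegree)
    (hsq : ∃ g : RatFunc ℂ, algebraMap (Polynomial ℂ) (RatFunc ℂ) (f.comp l) = g ^ 2) :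
    ∃ h : Polynomial ℂ, f = h ^ 2 := by
  classical
  obtain ⟨g, hg⟩ := hsq
  have hcomp : IsSquare (f.comp l) :=
    IsIntegrallyClosed.isSquare_of_isSquare_algebraMap (K := RatFunc ℂ) ⟨g, hg.trans (sq g)⟩
  have hodd : {a | Odd (f.roots.count a)}.Subsingleton := fun a (ha : Odd _) b (hb : Odd _) => by
    rw [count_roots] at ha hb
    exact eq_of_isSquare_sub_C hl (isSquare_sub_C_of_isSquare_comp hcomp ha)
      (isSquare_sub_C_of_isSquare_comp hcomp hb)
  have hcard : Even (Multiset.card f.roots) := (IsAlgClosed.splits f).natDegree_eq_card_roots ▸ hev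
  obtain ⟨h, hh⟩ := isSquare_of_forall_even_rootMultiplicity fun a =>
    count_roots f ▸ Multiset.even_count_of_even_card hcard hodd a
  exact ⟨h, hh.trans (sq h).symm⟩

/-- If f ∈ ℂ[X] is nonzero of even degree, λ ∈ ℂ[T] non-constant and f(λ) is a
square in ℂ(T), then f is a square in ℂ[X]. -/
theorem stmt_7 (f : Polynomial ℂ) (hf : f ≠ 0) (hev : Even f.natDegree)
    (l : Polynomial ℂ) (hl : 0 < l.natDegree)
    (hsq : ∃ g : RatFunc ℂ, algebraMap (Polynomial ℂ) (RatFunc ℂ) (f.comp l) = g ^ 2) :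
    ∃ h : Polynomial ℂ, f = h ^ 2 :=
  stmt_7_general f hev l hl hsq
end

section
/- With Hₙ as above, if m ∈ ℤ and Hₘ is a square in ℂ[X], then m ∈ {-2, 0, 1}. -/
/-!
Over a perfect field `K`, a polynomial that becomes a square over an extension of `K` is its
leading coefficient times a square in `K[X]`: each monic irreducible factor stays squarefree over
the extension, so it divides the square root there and hence divides the polynomial twice.
Over `ℚ` this leaves two contradictions. For `m ≥ 2`, `Hₘ` has leading coefficient `2` and nonzero
reduction mod `2`, and `Hₘ = 2 u²` in `ℚ[X]` is impossible since the `2`-adic valuation of the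
content would be odd on one side and even on the other. For `m = -k < 0`, `H_{-k}` has leading
coefficient `(-1)ᵏ` while `H_{-k}(1) = (-1)ᵏ⁻¹ F_{k-2}` has the opposite sign unless `k = 2`.
-/

open Polynomial

theorem Int.sq_mul_ne_prime_mul_sq {p : ℕ} [Fact p.Prime] {b c w : ℤ} (hb : b ≠ 0)
    (hc : ¬(p : ℤ) ∣ c) : b ^ 2 * c ≠ p * w ^ 2 := by
  intro h
  have hc0 : c ≠ 0 := by rintro rfl; exact hc (dvd_zero _)
  have hw : w ≠ 0 := by rintro rfl; simp_all
  have hp : (p : ℤ) ≠ 0 := by exact_mod_cast (Fact.out : p.Prime).ne_zero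
  have := congrArg (padicValInt p) h
  rw [padicValInt.mul (pow_ne_zero 2 hb) hc0, padicValInt.mul hp (pow_ne_zero 2 hw), sq, sq,
    padicValInt.mul hb hb, padicValInt.mul hw hw, padicValInt.eq_zero_of_not_dvd hc,
    padicValInt_self] at this
  omega

theorem Polynomial.map_int_ne_C_prime_mul_sq {p : ℕ} [Fact p.Prime] {f : ℤ[X]}
    (hf : f.map (Int.castRingHom (ZMod p)) ≠ 0) (u : ℚ[X]) :
    f.map (Int.castRingHom ℚ) ≠ C (p : ℚ) * u ^ 2 := by
  intro hfu
  obtain ⟨b, hb, hw⟩ := IsLocalization.integerNormalization_spec (nonZeroDivisors ℤ) u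
  set w := IsLocalization.integerNormalization (nonZeroDivisors ℤ) u
  have hclear : C (b ^ 2) * f = C (p : ℤ) * w ^ 2 := by
    apply map_injective (Int.castRingHom ℚ) Int.cast_injective
    have hw' : w.map (Int.castRingHom ℚ) = C (b : ℚ) * u := by
      rw [← smul_eq_C_mul, Int.cast_smul_eq_zsmul]; exact hw
    simp only [Polynomial.map_mul, Polynomial.map_pow, map_C, hfu, hw']
    simp only [eq_intCast, Int.cast_pow, Int.cast_natCast, C_pow]
    ring
  have hcontent := congrArg content hclear
  rw [content_C_mul, content_C_mul, sq w, content_mul, ← sq, Int.normalize_of_nonneg (sq_nonneg b),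
    Int.normalize_of_nonneg (Int.natCast_nonneg p)] at hcontent
  refine Int.sq_mul_ne_prime_mul_sq (nonZeroDivisors.ne_zero hb) ?_ hcontent
  intro hdvd
  refine hf (ext fun n => ?_)
  rw [coeff_map, coeff_zero, eq_intCast, ZMod.intCast_zmod_eq_zero_iff_dvd]
  exact hdvd.trans (content_dvd_coeff n)

section Descent

variable {K L : Type*} [Field K] [PerfectField K] [Field L] (φ : K →+* L)

theorem Polynomial.exists_eq_sq_mul_of_isSquare_map {f q : K[X]} (hq : Irreducible q)
    (hqm : q.Monic) (hqf : q ∣ f) (hf : IsSquare (f.map φ)) :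
    ∃ g, f = q ^ 2 * g ∧ IsSquare (g.map φ) := by
  obtain ⟨h, hh⟩ := hf
  have hqh : q.map φ ∣ h :=
    (PerfectField.separable_of_irreducible hq).map.squarefree.isRadical 2 h
      (by rw [sq, ← hh]; exact Polynomial.map_dvd φ hqf)
  obtain ⟨w, rfl⟩ := hqh
  have hq2f : q ^ 2 ∣ f := by
    rw [← map_dvd_map φ φ.injective (hqm.pow 2), Polynomial.map_pow, hh]
    exact ⟨w * w, by ring⟩
  obtain ⟨g, rfl⟩ := hq2f
  refine ⟨g, rfl, w, mul_left_cancel₀ (pow_ne_zero 2 (hqm.map φ).ne_zero) ?_⟩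
  rw [Polynomial.map_mul, Polynomial.map_pow] at hh
  linear_combination hh

theorem Polynomial.exists_eq_C_leadingCoeff_mul_sq_of_isSquare_map {f : K[X]}
    (hf : IsSquare (f.map φ)) : ∃ u, f = C f.leadingCoeff * u ^ 2 := by
  induction hn : f.natDegree using Nat.strong_induction_on generalizing f with
  | _ n ih =>
  rcases Nat.eq_zero_or_pos n with rfl | hpos
  · exact ⟨1, by rw [one_pow, mul_one, leadingCoeff, hn, ← eq_C_of_natDegree_eq_zero hn]⟩
  obtain ⟨q, hqm, hq, hqf⟩ := exists_monic_irreducible_factor f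
    (not_isUnit_of_natDegree_pos f (hn ▸ hpos))
  obtain ⟨g, rfl, hg⟩ := exists_eq_sq_mul_of_isSquare_map φ hq hqm hqf hf
  have hg0 : g ≠ 0 := by rintro rfl; simp at hn; omega
  have hdeg : (q ^ 2 * g).natDegree = 2 * q.natDegree + g.natDegree := by
    rw [natDegree_mul (pow_ne_zero 2 hqm.ne_zero) hg0, natDegree_pow]
  obtain ⟨v, hv⟩ := ih g.natDegree (by have := hq.natDegree_pos; omega) hg rfl
  refine ⟨q * v, ?_⟩
  rw [leadingCoeff_mul, (hqm.pow 2).leadingCoeff, one_mul]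
  nth_rw 1 [hv]
  ring

end Descent

theorem Polynomial.leadingCoeff_of_recurrence {R : Type*} [CommRing R] [IsDomain R]
    {s : ℕ → R[X]} {a : R} (ha : a ≠ 0) (hs : ∀ k, s (k + 2) = C a * X * s (k + 1) + s k)
    (h01 : (s 0).degree < (s 1).degree) (k : ℕ) :
    (s (k + 1)).leadingCoeff = a ^ k * (s 1).leadingCoeff := by
  suffices (s k).degree < (s (k + 1)).degree ∧
      (s (k + 1)).leadingCoeff = a ^ k * (s 1).leadingCoeff from this.2
  induction k with
  | zero => simpa using h01
  | succ k ih =>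
    obtain ⟨hlt, hlc⟩ := ih
    have hne : s (k + 1) ≠ 0 := ne_zero_of_degree_gt hlt
    have hdeg : (s (k + 1)).degree < (C a * X * s (k + 1)).degree := by
      rw [mul_assoc, degree_C_mul ha, mul_comm]
      exact degree_lt_degree_mul_X hne
    rw [hs]
    constructor
    · rwa [degree_add_eq_left_of_degree_lt (hlt.trans hdeg)]
    · rw [leadingCoeff_add_of_degree_lt' (hlt.trans hdeg), leadingCoeff_mul, leadingCoeff_mul,
        leadingCoeff_C, leadingCoeff_X, hlc]
      ring

namespace HPoly

variable {H : ℤ → ℤ[X]}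

theorem map_recurrence_nat {S : Type*} [CommRing S] (φ : ℤ →+* S)
    (hH : ∀ n : ℤ, H (n + 2) = X * H (n + 1) + H n) (k : ℕ) :
    (H ((k + 2 : ℕ) + 1)).map φ = C 1 * X * (H ((k + 1 : ℕ) + 1)).map φ + (H (k + 1)).map φ := by
  rw [C_1, one_mul, ← Polynomial.map_X φ, ← Polynomial.map_mul, ← Polynomial.map_add]
  congr 1
  convert hH (k + 1) using 2 <;> push_cast <;> ring

theorem recurrence_neg (hH : ∀ n : ℤ, H (n + 2) = X * H (n + 1) + H n) (k : ℕ) :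
    H (-(k + 2 : ℕ)) = C (-1) * X * H (-(k + 1 : ℕ)) + H (-k) := by
  have h := hH (-(k + 2 : ℕ))
  push_cast at h ⊢
  rw [show -((k : ℤ) + 2) + 2 = -k by ring, show -((k : ℤ) + 2) + 1 = -(k + 1) by ring] at h
  rw [h, C_neg, C_1]
  ring

theorem leadingCoeff_nat_add_two (hH0 : H 0 = 1) (hH1 : H 1 = 2)
    (hH : ∀ n : ℤ, H (n + 2) = X * H (n + 1) + H n) (k : ℕ) :
    (H (k + 2)).leadingCoeff = 2 := by
  have hH2 : H 2 = C 2 * X + C 1 := by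
    have := hH 0
    norm_num [hH0, hH1] at this
    rw [this, C_1, ← C_ofNat, mul_comm]
  have := leadingCoeff_of_recurrence (s := fun k : ℕ => H (k + 1))
    one_ne_zero (by simpa only [map_id] using map_recurrence_nat (RingHom.id ℤ) hH) ?_ k
  · rw [Nat.cast_one, one_add_one_eq_two, hH2, leadingCoeff_linear two_ne_zero, one_pow, one_mul,
      Nat.cast_succ, add_assoc, one_add_one_eq_two] at this
    exact this
  · rw [Nat.cast_one, one_add_one_eq_two, hH2, Nat.cast_zero, zero_add, hH1,
      degree_linear two_ne_zero, ← C_ofNat, degree_C two_ne_zero]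
    exact zero_lt_one

theorem map_nat_add_two_ne_zero (hH0 : H 0 = 1) (hH1 : H 1 = 2)
    (hH : ∀ n : ℤ, H (n + 2) = X * H (n + 1) + H n) (k : ℕ) :
    (H (k + 2)).map (Int.castRingHom (ZMod 2)) ≠ 0 := by
  have h2 : (2 : (ZMod 2)[X]) = 0 := by
    rw [← C_ofNat, show (OfNat.ofNat 2 : ZMod 2) = 0 from rfl, C_0]
  have hH1' : (H 1).map (Int.castRingHom (ZMod 2)) = 0 := by
    rw [hH1, Polynomial.map_ofNat, h2]
  have hH2 : (H 2).map (Int.castRingHom (ZMod 2)) = 1 := by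
    have := hH 0
    norm_num [hH0, hH1] at this
    rw [this]
    simp only [Polynomial.map_add, Polynomial.map_mul, Polynomial.map_X, Polynomial.map_one,
      Polynomial.map_ofNat, h2, mul_zero, zero_add]
  have := leadingCoeff_of_recurrence (s := fun k : ℕ => (H (k + 1)).map (Int.castRingHom (ZMod 2)))
    one_ne_zero (map_recurrence_nat _ hH) ?_ k
  · intro h0
    rw [Nat.cast_one, one_add_one_eq_two, hH2, leadingCoeff_one, one_pow, one_mul,
      Nat.cast_succ, add_assoc, one_add_one_eq_two, h0, leadingCoeff_zero] at this
    exact zero_ne_one this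
  · rw [Nat.cast_one, one_add_one_eq_two, hH2, Nat.cast_zero, zero_add, hH1', degree_zero,
      degree_one]
    exact WithBot.bot_lt_coe 0

theorem leadingCoeff_neg (hH0 : H 0 = 1) (hH1 : H 1 = 2)
    (hH : ∀ n : ℤ, H (n + 2) = X * H (n + 1) + H n) (k : ℕ) :
    (H (-k)).leadingCoeff = (-1) ^ k := by
  have hHm1 : H (-1) = C (-1) * X + C 2 := by
    have := hH (-1)
    norm_num [hH0, hH1] at this
    rw [C_neg, C_1, C_ofNat]; linear_combination -this
  rcases k with _ | k
  · rw [Nat.cast_zero, neg_zero, hH0, leadingCoeff_one, pow_zero]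
  have := leadingCoeff_of_recurrence (s := fun k : ℕ => H (-k)) (neg_ne_zero.2 one_ne_zero)
    (recurrence_neg hH) ?_ k
  · rw [Nat.cast_one, hHm1, leadingCoeff_linear (neg_ne_zero.2 one_ne_zero), ← pow_succ] at this
    exact this
  · rw [Nat.cast_one, hHm1, Nat.cast_zero, neg_zero, hH0, degree_linear (neg_ne_zero.2 one_ne_zero),
      degree_one]
    exact zero_lt_one

theorem eval_one_neg_one (hH0 : H 0 = 1) (hH1 : H 1 = 2)
    (hH : ∀ n : ℤ, H (n + 2) = X * H (n + 1) + H n) : (H (-1)).eval 1 = 1 := by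
  have := congrArg (eval 1) (hH (-1))
  norm_num [hH0, hH1] at this
  linarith

theorem eval_one_neg_nat_add_two (hH0 : H 0 = 1) (hH1 : H 1 = 2)
    (hH : ∀ n : ℤ, H (n + 2) = X * H (n + 1) + H n) (k : ℕ) :
    (H (-(k + 2 : ℕ))).eval 1 = (-1) ^ (k + 1) * (Nat.fib k : ℤ) := by
  have hstep (j : ℕ) : (H (-(j + 2 : ℕ))).eval 1 = (H (-j)).eval 1 - (H (-(j + 1 : ℕ))).eval 1 := by
    rw [recurrence_neg hH, eval_add, eval_mul, eval_mul, eval_C, eval_X]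
    ring
  have he1 := eval_one_neg_one hH0 hH1 hH
  induction k using Nat.twoStepInduction with
  | zero => rw [hstep]; simp [hH0, he1]
  | one => rw [hstep, show 1 + 1 = 0 + 2 from rfl, hstep]; simp [hH0, he1]
  | more j ih₀ ih₁ =>
    rw [hstep, ih₀, ih₁, Nat.fib_add_two]
    push_cast
    ring

theorem neg_one_pow_mul_eval_one_neg_lt_zero (hH0 : H 0 = 1) (hH1 : H 1 = 2)
    (hH : ∀ n : ℤ, H (n + 2) = X * H (n + 1) + H n) {k : ℕ} (hk0 : k ≠ 0) (hk2 : k ≠ 2) :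
    (-1) ^ k * (H (-k)).eval 1 < 0 := by
  obtain rfl | ⟨j, rfl⟩ : k = 1 ∨ ∃ j, k = j + 3 := by
    rcases k with _ | _ | _ | j <;> simp_all
  · simp [eval_one_neg_one hH0 hH1 hH]
  · rw [show j + 3 = (j + 1) + 2 from rfl, eval_one_neg_nat_add_two hH0 hH1 hH]
    have hsign : (-1 : ℤ) ^ (j + 3) * (-1) ^ (j + 1 + 1) = -1 := by
      rw [← pow_add]; exact Odd.neg_one_pow ⟨j + 2, by ring⟩
    rw [← mul_assoc, hsign, neg_one_mul, neg_lt_zero, Nat.cast_pos]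
    exact Nat.fib_pos.2 j.succ_pos

end HPoly

/-- With H₀ = 1, H₁ = 2, H_{n+2} = X·H_{n+1} + Hₙ (n ∈ ℤ), if Hₘ is a square
in ℂ[X] then m ∈ {-2, 0, 1}. -/
theorem stmt_16 (H : ℤ → Polynomial ℤ)
    (hH0 : H 0 = 1) (hH1 : H 1 = 2)
    (hH : ∀ n : ℤ, H (n + 2) = Polynomial.X * H (n + 1) + H n)
    (m : ℤ) (hm : ∃ h : Polynomial ℂ, (H m).map (Int.castRingHom ℂ) = h ^ 2) :
    m = -2 ∨ m = 0 ∨ m = 1 := by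
  obtain ⟨h, hh⟩ := hm
  obtain ⟨u, hu⟩ := exists_eq_C_leadingCoeff_mul_sq_of_isSquare_map (algebraMap ℚ ℂ)
    (f := (H m).map (Int.castRingHom ℚ)) ⟨h, by rw [map_map, ← sq, ← hh]; congr⟩
  rw [leadingCoeff_map_of_injective (RingHom.injective_int _)] at hu
  by_contra hne
  obtain ⟨k, rfl⟩ | ⟨k, rfl, hk0, hk2⟩ :
      (∃ k : ℕ, m = k + 2) ∨ ∃ k : ℕ, m = -k ∧ k ≠ 0 ∧ k ≠ 2 := by
    rcases le_or_gt 2 m with hm2 | hm2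
    · exact Or.inl ⟨(m - 2).toNat, by omega⟩
    · exact Or.inr ⟨(-m).toNat, by omega, by omega, by omega⟩
  · rw [HPoly.leadingCoeff_nat_add_two hH0 hH1 hH] at hu
    exact map_int_ne_C_prime_mul_sq (p := 2) (HPoly.map_nat_add_two_ne_zero hH0 hH1 hH k) u
      (by simpa using hu)
  · rw [HPoly.leadingCoeff_neg hH0 hH1 hH] at hu
    have heval := congrArg (eval 1) hu
    rw [eval_one_map, eval_mul, eval_C, eval_pow] at heval
    have hsq : (((-1) ^ k * (H (-k)).eval 1 : ℤ) : ℚ) = (u.eval 1) ^ 2 := by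
      rw [Int.cast_mul, ← eq_intCast (Int.castRingHom ℚ), ← eq_intCast (Int.castRingHom ℚ), heval,
        ← mul_assoc, ← map_mul, ← mul_pow, neg_one_mul, neg_neg, one_pow, map_one, one_mul]
    exact (HPoly.neg_one_pow_mul_eval_one_neg_lt_zero hH0 hH1 hH hk0 hk2).not_ge
      (by exact_mod_cast hsq ▸ sq_nonneg _)
end

section
/- Let ξ ∈ ℂ^× and λ ∈ ℂ[T] non-constant, and set F(X,Y) = X(X-Y)(X+Y)(X-λY) + Y⁴. Then the set of pairs (x,y) ∈ ℂ[T] × ℂ[T] with F(x,y) = ξ is exactly { (ζ,0), (0,ζ), (ζ,ζ), (-ζ,ζ), (ζλ,ζ), (-ζ,ζλ) : ζ ∈ ℂ^×, ζ⁴ = ξ }. -/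
open Polynomial

noncomputable section Aux19

namespace Aux19

/-- The Fibonacci-like sequence of polynomials: `Fq 0 = 0`, `Fq 1 = 1`,
`Fq (n+2) = -(X * Fq (n+1)) - Fq n`. -/
def Fq : ℕ → Polynomial ℂ
  | 0 => 0
  | 1 => 1
  | (n+2) => -(X * Fq (n+1)) - Fq n

@[simp] lemma Fq_zero : Fq 0 = 0 := rfl
@[simp] lemma Fq_one : Fq 1 = 1 := rfl
lemma Fq_add_two (n : ℕ) : Fq (n+2) = -(X * Fq (n+1)) - Fq n := rfl

lemma Fq_two : Fq 2 = -X := by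
  rw [show (2:ℕ) = 0+2 from rfl, Fq_add_two]; simp

lemma Fq_three : Fq 3 = X^2 - 1 := by
  rw [show (3:ℕ) = 1+2 from rfl, Fq_add_two, Fq_two, Fq_one]; ring

lemma Fq_four : Fq 4 = -X^3 + 2*X := by
  rw [show (4:ℕ) = 2+2 from rfl, Fq_add_two, Fq_three, Fq_two]; ring

/-- Pell-type identity. -/
lemma Fq_pell (n : ℕ) : Fq n ^ 2 + X * Fq n * Fq (n+1) + Fq (n+1) ^ 2 = 1 := by
  induction n with
  | zero => simp
  | succ n ih =>
    have h := Fq_add_two n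
    calc Fq (n+1) ^ 2 + X * Fq (n+1) * Fq (n+2) + Fq (n+2) ^ 2
        = Fq n ^ 2 + X * Fq n * Fq (n+1) + Fq (n+1) ^ 2 := by rw [h]; ring
      _ = 1 := ih

lemma Fq_ne_zero_natDegree (n : ℕ) :
    (Fq (n+1) ≠ 0 ∧ (Fq (n+1)).natDegree = n) ∧
    (Fq (n+2) ≠ 0 ∧ (Fq (n+2)).natDegree = n+1) := by
  induction n with
  | zero =>
    refine ⟨⟨one_ne_zero, natDegree_one⟩, ?_, ?_⟩
    · rw [Fq_two]; simp
    · rw [Fq_two]; simp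
  | succ n ih =>
    obtain ⟨⟨h1, d1⟩, h2, d2⟩ := ih
    refine ⟨⟨h2, d2⟩, ?_⟩
    have hx : (X * Fq (n+2)).natDegree = n + 2 := by
      rw [natDegree_mul X_ne_zero h2, natDegree_X, d2]; omega
    have hlt : (Fq (n+1)).natDegree < (-(X * Fq (n+2))).natDegree := by
      rw [natDegree_neg, hx, d1]; omega
    constructor
    · intro h0
      have := natDegree_sub_eq_left_of_natDegree_lt hlt
      rw [← Fq_add_two, h0] at this
      simp [natDegree_neg, hx] at this
    · rw [Fq_add_two, natDegree_sub_eq_left_of_natDegree_lt hlt, natDegree_neg, hx]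

lemma Fq_succ_ne_zero (n : ℕ) : Fq (n+1) ≠ 0 := (Fq_ne_zero_natDegree n).1.1

lemma Fq_natDegree (n : ℕ) : (Fq (n+1)).natDegree = n := (Fq_ne_zero_natDegree n).1.2

/-- `Rp n = Fq (n+2) - Fq n`. -/
def Rp (n : ℕ) : Polynomial ℂ := Fq (n+2) - Fq n

lemma Rp_eq (n : ℕ) : Rp n = 2 * Fq (n+2) + X * Fq (n+1) := by
  have h := Fq_add_two n
  unfold Rp
  have : Fq n = -(X * Fq (n+1)) - Fq (n+2) := by rw [h]; ring
  rw [this]; ring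

lemma Rp_eq' (n : ℕ) : Rp (n+1) = -(X * Fq (n+2)) - 2 * Fq (n+1) := by
  have h := Fq_add_two (n+1)
  unfold Rp
  rw [h]; ring

/-- Derivative identity `(X²-4)·Fq(n+1)' = -(n+1)·Rp n - X·Fq (n+1)`. -/
lemma Fq_deriv (n : ℕ) :
    ((X^2 - 4) * derivative (Fq (n+1)) = -((n : Polynomial ℂ)+1) * Rp n - X * Fq (n+1)) ∧
    ((X^2 - 4) * derivative (Fq (n+2)) = -((n : Polynomial ℂ)+2) * Rp (n+1) - X * Fq (n+2)) := by
  induction n with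
  | zero =>
    constructor
    · unfold Rp
      norm_num [Fq_two, Fq_zero, Fq_one]
    · unfold Rp
      norm_num [Fq_two, Fq_three, Fq_one]
      ring
  | succ n ih =>
    obtain ⟨ih1, ih2⟩ := ih
    constructor
    · push_cast at ih2 ⊢
      linear_combination ih2
    · have hd : derivative (Fq (n+3)) =
          -(Fq (n+2) + X * derivative (Fq (n+2))) - derivative (Fq (n+1)) := by
        rw [Fq_add_two (n+1)]
        simp [derivative_mul]
      have hr4 : Fq (n+4) = -(X * Fq (n+3)) - Fq (n+2) := Fq_add_two (n+2)
      have hrn : Fq (n+2) = -(X * Fq (n+1)) - Fq n := Fq_add_two n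
      rw [show n+1+1 = n+2 from rfl, show n+1+2 = n+3 from rfl, hd]
      unfold Rp at ih1 ih2 ⊢
      rw [show n+1+2 = n+3 from rfl] at ih2
      rw [show n+2+2 = n+4 from rfl]
      push_cast at ih1 ih2 ⊢
      linear_combination (-(X : Polynomial ℂ)) * ih2 - ih1 + ((n:Polynomial ℂ)+3) * hr4 - ((n:Polynomial ℂ)+1) * hrn

lemma X2_sub_4_ne : (X^2 - 4 : Polynomial ℂ) ≠ 0 := fun h => by
  have := congrArg (eval 3) h
  norm_num at this

lemma Rp_deriv (n : ℕ) : derivative (Rp n) = -((n : Polynomial ℂ)+1) * Fq (n+1) := by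
  apply mul_left_cancel₀ X2_sub_4_ne
  obtain ⟨h1, h2⟩ := Fq_deriv n
  have he : Rp n = 2 * Fq (n+2) + X * Fq (n+1) := Rp_eq n
  have hd : derivative (Rp n) =
      2 * derivative (Fq (n+2)) + (Fq (n+1) + X * derivative (Fq (n+1))) := by
    rw [he]; simp [derivative_mul]; try ring
  have hr : Fq (n+2) = -(X * Fq (n+1)) - Fq n := Fq_add_two n
  unfold Rp at h1 h2
  rw [show n+1+2 = n+3 from rfl] at h2
  have hr3 : Fq (n+3) = -(X * Fq (n+2)) - Fq (n+1) := Fq_add_two (n+1)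
  rw [hd]
  linear_combination (X : Polynomial ℂ) * h1 + 2 * h2 - 2*((n:Polynomial ℂ)+2)*hr3 + ((n:Polynomial ℂ)+1) * ((X:Polynomial ℂ)) * hr

open Complex in
/-- case `m = k+1`: `A = Fq (a+1) + 2i Fq (a+2)`. -/
def A1p (a : ℕ) : Polynomial ℂ := Fq (a+1) + C (2*I) * Fq (a+2)

open Complex in
def B1p (a : ℕ) : Polynomial ℂ :=
  ((a : Polynomial ℂ)+1) * Rp a + C (2*I) * ((a : Polynomial ℂ)+2) * Rp (a+1)

open Complex in
def A2p (a : ℕ) : Polynomial ℂ := Fq (a+2) + C (2*I) * Fq (a+1)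

open Complex in
def B2p (a : ℕ) : Polynomial ℂ :=
  ((a : Polynomial ℂ)+2) * Rp (a+1) + C (2*I) * ((a : Polynomial ℂ)+1) * Rp a

lemma ID1_1 (a : ℕ) : (X^2 - 4) * derivative (A1p a) = -X * A1p a - B1p a := by
  obtain ⟨h1, h2⟩ := Fq_deriv a
  unfold A1p B1p
  simp only [derivative_add, derivative_mul, derivative_C, zero_mul, zero_add]
  linear_combination h1 + C (2*Complex.I) * h2

lemma ID1_2 (a : ℕ) : (X^2 - 4) * derivative (A2p a) = -X * A2p a - B2p a := by
  obtain ⟨h1, h2⟩ := Fq_deriv a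
  unfold A2p B2p
  simp only [derivative_add, derivative_mul, derivative_C, zero_mul, zero_add]
  linear_combination h2 + C (2*Complex.I) * h1

lemma ID2_1 (a : ℕ) : derivative (B1p a) =
    -((a : Polynomial ℂ)+1)^2 * Fq (a+1) - C (2*Complex.I) * ((a : Polynomial ℂ)+2)^2 * Fq (a+2) := by
  unfold B1p
  have r1 := Rp_deriv a
  have r2 := Rp_deriv (a+1)
  push_cast at r2
  simp only [derivative_add, derivative_mul, derivative_C, zero_mul, zero_add,
    derivative_natCast, derivative_one, add_zero, zero_add, derivative_ofNat]
  rw [show ((a:Polynomial ℂ)+1+1) = (a:Polynomial ℂ)+2 by ring] at r2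
  linear_combination ((a : Polynomial ℂ)+1) * r1 + C (2*Complex.I) * ((a : Polynomial ℂ)+2) * r2

lemma ID2_2 (a : ℕ) : derivative (B2p a) =
    -((a : Polynomial ℂ)+2)^2 * Fq (a+2) - C (2*Complex.I) * ((a : Polynomial ℂ)+1)^2 * Fq (a+1) := by
  unfold B2p
  have r1 := Rp_deriv a
  have r2 := Rp_deriv (a+1)
  push_cast at r2
  simp only [derivative_add, derivative_mul, derivative_C, zero_mul, zero_add,
    derivative_natCast, derivative_one, add_zero, zero_add, derivative_ofNat]
  rw [show ((a:Polynomial ℂ)+1+1) = (a:Polynomial ℂ)+2 by ring] at r2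
  linear_combination ((a : Polynomial ℂ)+2) * r2 + C (2*Complex.I) * ((a : Polynomial ℂ)+1) * r1

open Complex in
lemma evalB1_zero (a : ℕ) (z : ℂ) (hA : (A1p a).eval z = 0)
    (hA' : (derivative (A1p a)).eval z = 0) : (B1p a).eval z = 0 := by
  have h := congrArg (eval z) (ID1_1 a)
  simp only [eval_mul, eval_sub, eval_add, eval_neg, eval_pow, eval_X, eval_ofNat,
    hA, hA'] at h
  linear_combination h

open Complex in
lemma evalB2_zero (a : ℕ) (z : ℂ) (hA : (A2p a).eval z = 0)
    (hA' : (derivative (A2p a)).eval z = 0) : (B2p a).eval z = 0 := by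
  have h := congrArg (eval z) (ID1_2 a)
  simp only [eval_mul, eval_sub, eval_add, eval_neg, eval_pow, eval_X, eval_ofNat,
    hA, hA'] at h
  linear_combination h

open Complex in
lemma CRF1 (a : ℕ) (z : ℂ) (hA : (A1p a).eval z = 0) (hB : (B1p a).eval z = 0) :
    (Fq (a+2)).eval z ≠ 0 ∧ I*z*(2*(a:ℂ)+3) = -(3*(a:ℂ)+7) ∧
      (-3 - 2*I*z) * ((Fq (a+2)).eval z)^2 = 1 := by
  set u := (Fq (a+1)).eval z with hudef
  set v := (Fq (a+2)).eval z with hvdef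
  have hu : u + 2*I*v = 0 := by
    have := hA
    unfold A1p at this
    simp only [eval_add, eval_mul, eval_C] at this
    linear_combination this
  have hBe : ((a:ℂ)+1)*(2*v + z*u) + 2*I*((a:ℂ)+2)*(-(z*v) - 2*u) = 0 := by
    have := hB
    unfold B1p at this
    rw [Rp_eq, Rp_eq'] at this
    simp only [eval_add, eval_mul, eval_C, eval_natCast, eval_one, eval_X, eval_neg,
      eval_sub, eval_ofNat] at this
    linear_combination this
  have hp : u^2 + z*u*v + v^2 = 1 := by
    have := congrArg (eval z) (Fq_pell (a+1))
    simp only [eval_add, eval_mul, eval_pow, eval_X, eval_one] at this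
    rw [show a+1+1 = a+2 from rfl] at this
    linear_combination this
  have hI : I*I + 1 = 0 := by
    have := Complex.I_mul_I
    linear_combination this
  have hv : v ≠ 0 := by
    intro h0
    have hu0 : u = 0 := by rw [h0] at hu; linear_combination hu
    rw [h0, hu0] at hp
    norm_num at hp
  refine ⟨hv, ?_, ?_⟩
  · have key : v * (-2) * ((3*(a:ℂ)+7) + I*z*(2*(a:ℂ)+3)) = 0 := by
      linear_combination hBe + (-z + 8*I - (a:ℂ)*z + 4*(a:ℂ)*I) * hu + (-16*v - 8*(a:ℂ)*v) * hI
    rcases mul_eq_zero.1 key with h | h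
    · rcases mul_eq_zero.1 h with h | h
      · exact absurd h hv
      · norm_num at h
    · linear_combination h
  · linear_combination hp + (-v*z + 2*v*I - u) * hu + (-4*v^2) * hI

open Complex in
lemma CRF2 (a : ℕ) (z : ℂ) (hA : (A2p a).eval z = 0) (hB : (B2p a).eval z = 0) :
    (Fq (a+1)).eval z ≠ 0 ∧ I*z*(2*(a:ℂ)+3) = -(3*(a:ℂ)+2) ∧
      (-3 - 2*I*z) * ((Fq (a+1)).eval z)^2 = 1 := by
  set u := (Fq (a+1)).eval z with hudef
  set v := (Fq (a+2)).eval z with hvdef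
  have hu2 : v + 2*I*u = 0 := by
    have := hA
    unfold A2p at this
    simp only [eval_add, eval_mul, eval_C] at this
    linear_combination this
  have hBe2 : ((a:ℂ)+2)*(-(z*v) - 2*u) + 2*I*((a:ℂ)+1)*(2*v + z*u) = 0 := by
    have := hB
    unfold B2p at this
    rw [Rp_eq', Rp_eq] at this
    simp only [eval_add, eval_mul, eval_C, eval_natCast, eval_one, eval_X, eval_neg,
      eval_sub, eval_ofNat] at this
    linear_combination this
  have hp : u^2 + z*u*v + v^2 = 1 := by
    have := congrArg (eval z) (Fq_pell (a+1))
    simp only [eval_add, eval_mul, eval_pow, eval_X, eval_one] at this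
    rw [show a+1+1 = a+2 from rfl] at this
    linear_combination this
  have hI : I*I + 1 = 0 := by
    have := Complex.I_mul_I
    linear_combination this
  have hv : u ≠ 0 := by
    intro h0
    have hu0 : v = 0 := by rw [h0] at hu2; linear_combination hu2
    rw [h0, hu0] at hp
    norm_num at hp
  refine ⟨hv, ?_, ?_⟩
  · have key : u * (-2) * ((3*(a:ℂ)+2) + I*z*(2*(a:ℂ)+3)) = 0 := by
      linear_combination (-1 : ℂ) * hBe2 + (-2*z + 4*I - (a:ℂ)*z + 4*(a:ℂ)*I) * hu2 + (-8*u - 8*(a:ℂ)*u) * hI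
    rcases mul_eq_zero.1 key with h | h
    · rcases mul_eq_zero.1 h with h | h
      · exact absurd h hv
      · norm_num at h
    · linear_combination h
  · linear_combination hp + (-v - u*z + 2*u*I) * hu2 + (-4*u^2) * hI

lemma exists_common_root_of_not_coprime (p q : Polynomial ℂ) (hp : p ≠ 0)
    (h : ¬ IsCoprime p q) : ∃ z, p.eval z = 0 ∧ q.eval z = 0 := by
  classical
  set g := EuclideanDomain.gcd p q with hg
  have hgu : ¬ IsUnit g := fun hu => h (EuclideanDomain.gcd_isUnit_iff.1 hu)
  have hg0 : g ≠ 0 := by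
    intro h0
    exact hp ((EuclideanDomain.gcd_eq_zero_iff.1 h0).1)
  obtain ⟨z, hz⟩ := Complex.exists_root (degree_pos_of_ne_zero_of_nonunit hg0 hgu)
  exact ⟨z, eval_eq_zero_of_dvd_of_eval_eq_zero (EuclideanDomain.gcd_dvd_left p q) hz,
    eval_eq_zero_of_dvd_of_eval_eq_zero (EuclideanDomain.gcd_dvd_right p q) hz⟩

lemma isCoprime_of_no_common_root (p q : Polynomial ℂ) (hp : p ≠ 0)
    (h : ∀ z, p.eval z = 0 → q.eval z ≠ 0) : IsCoprime p q := by
  by_contra hc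
  obtain ⟨z, h1, h2⟩ := exists_common_root_of_not_coprime p q hp hc
  exact h z h1 h2

/-- extraction of squares from coprime factorizations -/
lemma sq_of_coprime_poly (a b w : Polynomial ℂ) (c : ℂ) (hc : c ≠ 0)
    (hco : IsCoprime a b) (h : a * b = C c * w ^ 2) :
    ∃ (c' : ℂ) (v : Polynomial ℂ), c' ≠ 0 ∧ a = C c' * v ^ 2 := by
  obtain ⟨γ, hγ⟩ := IsAlgClosed.exists_pow_nat_eq c (n := 2) (by norm_num)
  have h' : a * b = (C γ * w) ^ 2 := by
    rw [mul_pow, ← map_pow, hγ, h]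
  obtain ⟨d, u, hu⟩ := exists_associated_pow_of_mul_eq_pow' hco h'
  obtain ⟨r, hru, hCr⟩ := Polynomial.isUnit_iff.1 u.isUnit
  refine ⟨r, d, ?_, ?_⟩
  · exact hru.ne_zero
  · rw [← hu, ← hCr]; ring

/-- The key derivative trick: a squarefree polynomial of degree ≥ 2 compsed with a
nonconstant polynomial is never a constant times a square. -/
lemma trick (l : Polynomial ℂ) (hl : 0 < l.natDegree) (S : Polynomial ℂ)
    (hS : 2 ≤ S.natDegree) (hco : IsCoprime S (derivative S)) (c : ℂ) (w : Polynomial ℂ)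
    (hc : c ≠ 0) (h : S.comp l = C c * w ^ 2) : False := by
  have hcomp : (S.comp l).natDegree = S.natDegree * l.natDegree := natDegree_comp
  have hw0 : w ≠ 0 := by
    intro h0
    rw [h0] at h
    simp only [ne_eq, OfNat.ofNat_ne_zero, not_false_eq_true, zero_pow, mul_zero] at h
    rw [h, natDegree_zero] at hcomp
    have h2 : 2 * 1 ≤ S.natDegree * l.natDegree := Nat.mul_le_mul hS hl
    omega
  have hdw : 2 * w.natDegree = S.natDegree * l.natDegree := by
    rw [← hcomp, h, natDegree_C_mul hc, natDegree_pow]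
  have h1 := derivative_comp S l
  rw [h, derivative_C_mul, derivative_pow] at h1
  have hco2 : IsCoprime (S.comp l) ((derivative S).comp l) := by
    obtain ⟨U, V, hUV⟩ := hco
    refine ⟨U.comp l, V.comp l, ?_⟩
    have := congrArg (fun p : Polynomial ℂ => p.comp l) hUV
    simpa only [add_comp, mul_comp, one_comp] using this
  have hwS : w ∣ S.comp l := ⟨C c * w, by rw [h]; ring⟩
  have hcow : IsCoprime w ((derivative S).comp l) := hco2.of_isCoprime_of_dvd_left hwS
  have hwdvd : w ∣ ((derivative S).comp l) * derivative l := by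
    refine ⟨C c * C ((2:ℕ):ℂ) * derivative w, ?_⟩
    rw [mul_comm ((derivative S).comp l) (derivative l), ← h1]
    norm_num
    ring
  have hwl : w ∣ derivative l := hcow.dvd_of_dvd_mul_left hwdvd
  have hl' : derivative l ≠ 0 := by
    intro h0
    have := natDegree_eq_zero_of_derivative_eq_zero h0
    omega
  have h1 : w.natDegree ≤ (derivative l).natDegree := natDegree_le_of_dvd hwl hl'
  have h2 : (derivative l).natDegree < l.natDegree := natDegree_derivative_lt (by omega)
  nlinarith [hS, hl, hdw, h1, h2]

/-- Core of the general (high-degree) case. -/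
lemma gen_core (l : Polynomial ℂ) (hl : 0 < l.natDegree) (A B : Polynomial ℂ)
    (hdeg : 4 ≤ A.natDegree) (hA0 : A ≠ 0)
    (hID1 : (X^2 - 4) * derivative A = -X * A - B)
    (κ μ : ℂ) (hκ : κ ≠ 0)
    (huniq : ∀ z, A.eval z = 0 → B.eval z = 0 → Complex.I * z * κ = μ)
    (hDB : ∀ z, A.eval z = 0 → B.eval z = 0 → (derivative B).eval z ≠ 0)
    (c : ℂ) (w : Polynomial ℂ) (hc : c ≠ 0) (h : A.comp l = C c * w ^ 2) : False := by
  -- common roots of A and A' are roots of B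
  have hBroot : ∀ z, A.eval z = 0 → (derivative A).eval z = 0 → B.eval z = 0 := by
    intro z h1 h2
    have := congrArg (eval z) hID1
    simp only [eval_mul, eval_sub, eval_add, eval_neg, eval_pow, eval_X, eval_ofNat,
      h1, h2] at this
    linear_combination this
  by_cases hcop : IsCoprime A (derivative A)
  · exact trick l hl A (by omega) hcop c w hc h
  · obtain ⟨z₀, hA0z, hA0z'⟩ := exists_common_root_of_not_coprime _ _ hA0 hcop
    have hB0 : B.eval z₀ = 0 := hBroot z₀ hA0z hA0z'
    -- factor A = (X - C z₀)^2 * A₁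
    obtain ⟨A₂, hA2⟩ := dvd_iff_isRoot.2 hA0z
    have hA2z : A₂.eval z₀ = 0 := by
      have hd := congrArg (eval z₀) (congrArg derivative hA2)
      simp only [derivative_mul, derivative_sub, derivative_X, derivative_C, sub_zero,
        one_mul, eval_add, eval_mul, eval_sub, eval_X, eval_C, sub_self, zero_mul,
        hA0z'] at hd
      linear_combination -hd
    obtain ⟨A₁, hA1⟩ := dvd_iff_isRoot.2 hA2z
    have hAfac : A = (X - C z₀)^2 * A₁ := by rw [hA2, hA1]; ring
    -- multiplicity at z₀ is exactly 2
    have hA1z : A₁.eval z₀ ≠ 0 := by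
      intro h0
      obtain ⟨A₀, hA0f⟩ := dvd_iff_isRoot.2 h0
      have hAfac3 : A = (X - C z₀)^3 * A₀ := by rw [hAfac, hA0f]; ring
      have hDA : derivative A = (X - C z₀)^2 * (3 * A₀ + (X - C z₀) * derivative A₀) := by
        rw [hAfac3]
        simp only [derivative_mul, derivative_pow, derivative_sub, derivative_X,
          derivative_C, sub_zero, mul_one, C_eq_natCast]
        push_cast
        ring
      have hBfac : B = (X - C z₀)^2 *
          (-(X^2-4) * (3 * A₀ + (X - C z₀) * derivative A₀) - X * ((X - C z₀) * A₀)) := by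
        linear_combination hID1 - (X^2-4) * hDA - (X : Polynomial ℂ) * hAfac3
      have hDB0 : (derivative B).eval z₀ = 0 := by
        rw [hBfac]
        simp [derivative_mul, derivative_pow]
      exact hDB z₀ hA0z hB0 hDB0
    -- A₁ is squarefree
    have hA10 : A₁ ≠ 0 := by
      intro h0
      rw [h0, mul_zero] at hAfac
      exact hA0 hAfac
    have hcop1 : IsCoprime A₁ (derivative A₁) := by
      apply isCoprime_of_no_common_root _ _ hA10
      intro z₁ h1 h2
      have hAz1 : A.eval z₁ = 0 := by rw [hAfac]; simp [h1]
      have hAz1' : (derivative A).eval z₁ = 0 := by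
        have : derivative A = 2 * (X - C z₀) * A₁ + (X - C z₀)^2 * derivative A₁ := by
          rw [hAfac]
          simp only [derivative_mul, derivative_pow, derivative_sub, derivative_X,
            derivative_C, sub_zero, mul_one, C_eq_natCast]
          push_cast
          ring
        rw [this]
        simp [h1, h2]
      have hBz1 : B.eval z₁ = 0 := hBroot z₁ hAz1 hAz1'
      have e1 := huniq z₁ hAz1 hBz1
      have e0 := huniq z₀ hA0z hB0
      have : z₁ = z₀ := by
        have h3 : Complex.I * z₁ * κ = Complex.I * z₀ * κ := by rw [e1, e0]
        have h4 := mul_right_cancel₀ hκ h3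
        exact mul_left_cancel₀ Complex.I_ne_zero h4
      rw [this] at h1
      exact hA1z h1
    -- extraction of the square
    have hcompfac : A.comp l = (l - C z₀)^2 * (A₁.comp l) := by
      rw [hAfac]
      simp [mul_comp, pow_comp, sub_comp, X_comp, C_comp]
    have hlz : (l - C z₀) ≠ 0 := by
      intro h0
      have : l = C z₀ := by linear_combination h0
      rw [this, natDegree_C] at hl
      omega
    have hcop2 : IsCoprime ((l - C z₀)^2) (A₁.comp l) := by
      apply isCoprime_of_no_common_root _ _ (pow_ne_zero _ hlz)
      intro t h1 h2
      have hlt : l.eval t = z₀ := by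
        simp only [eval_pow, eval_sub, eval_C] at h1
        have h3 := pow_eq_zero_iff (n := 2) (by norm_num) |>.1 h1
        linear_combination h3
      rw [eval_comp, hlt] at h2
      exact hA1z h2
    obtain ⟨c', v, hc', hsq⟩ := sq_of_coprime_poly (A₁.comp l) ((l - C z₀)^2) w c hc
      hcop2.symm (by rw [mul_comm, ← hcompfac, h])
    -- degree of A₁
    have hdeg1 : 2 ≤ A₁.natDegree := by
      have := hAfac
      have hd := natDegree_mul (p := (X - C z₀)^2) (q := A₁) (by
        apply pow_ne_zero
        intro h0
        have := congrArg natDegree h0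
        simp [natDegree_X_sub_C] at this) hA10
      rw [← hAfac, natDegree_pow, natDegree_X_sub_C] at hd
      omega
    exact trick l hl A₁ hdeg1 hcop1 c' v hc' hsq

open Complex in
lemma two_I_ne : (2*I : ℂ) ≠ 0 := mul_ne_zero two_ne_zero I_ne_zero

open Complex in
lemma A1p_natDegree (a : ℕ) : (A1p a).natDegree = a+1 := by
  unfold A1p
  have h2 : (C (2*I) * Fq (a+2)).natDegree = a+1 := by
    rw [natDegree_C_mul two_I_ne]
    exact Fq_natDegree (a+1)
  have h1 : (Fq (a+1)).natDegree = a := Fq_natDegree a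
  rw [natDegree_add_eq_right_of_natDegree_lt (by omega), h2]

open Complex in
lemma A2p_natDegree (a : ℕ) : (A2p a).natDegree = a+1 := by
  unfold A2p
  have h2 : (C (2*I) * Fq (a+1)).natDegree = a := by
    rw [natDegree_C_mul two_I_ne]
    exact Fq_natDegree a
  have h1 : (Fq (a+2)).natDegree = a+1 := Fq_natDegree (a+1)
  rw [natDegree_add_eq_left_of_natDegree_lt (by omega), h1]

lemma A1p_ne_zero (a : ℕ) : A1p a ≠ 0 := by
  intro h
  have := A1p_natDegree a
  rw [h, natDegree_zero] at this
  omega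

lemma A2p_ne_zero (a : ℕ) : A2p a ≠ 0 := by
  intro h
  have := A2p_natDegree a
  rw [h, natDegree_zero] at this
  omega

lemma cast_na_ne (a : ℕ) : (2*(a:ℂ)+3) ≠ 0 := by
  have : ((2*a+3 : ℕ) : ℂ) ≠ 0 := Nat.cast_ne_zero.2 (by omega)
  push_cast at this
  exact this

open Complex in
lemma gen1 (l : Polynomial ℂ) (hl : 0 < l.natDegree) (a : ℕ) (ha : 3 ≤ a)
    (c : ℂ) (hc : c ≠ 0) (w : Polynomial ℂ) (h : (A1p a).comp l = C c * w ^ 2) : False := by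
  apply gen_core l hl (A1p a) (B1p a) (by rw [A1p_natDegree]; omega) (A1p_ne_zero a)
    (ID1_1 a) (2*(a:ℂ)+3) (-(3*(a:ℂ)+7)) (cast_na_ne a) ?_ ?_ c w hc h
  · intro z hA hB
    exact (CRF1 a z hA hB).2.1
  · intro z hA hB hDB0
    have hv := (CRF1 a z hA hB).1
    have hu : (Fq (a+1)).eval z + 2*I*((Fq (a+2)).eval z) = 0 := by
      have := hA
      unfold A1p at this
      simp only [eval_add, eval_mul, eval_C] at this
      linear_combination this
    have hIDe := congrArg (eval z) (ID2_1 a)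
    rw [hDB0] at hIDe
    simp only [eval_mul, eval_pow, eval_add, eval_natCast, eval_one, eval_neg,
      eval_sub, eval_C, eval_ofNat] at hIDe
    have key : ((Fq (a+2)).eval z) * (2*I*(2*(a:ℂ)+3)) = 0 := by
      linear_combination hIDe - ((a:ℂ)+1)^2 * hu
    rcases mul_eq_zero.1 key with h1 | h1
    · exact hv h1
    · exact mul_ne_zero two_I_ne (cast_na_ne a) h1

open Complex in
lemma gen2 (l : Polynomial ℂ) (hl : 0 < l.natDegree) (a : ℕ) (ha : 3 ≤ a)
    (c : ℂ) (hc : c ≠ 0) (w : Polynomial ℂ) (h : (A2p a).comp l = C c * w ^ 2) : False := by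
  apply gen_core l hl (A2p a) (B2p a) (by rw [A2p_natDegree]; omega) (A2p_ne_zero a)
    (ID1_2 a) (2*(a:ℂ)+3) (-(3*(a:ℂ)+2)) (cast_na_ne a) ?_ ?_ c w hc h
  · intro z hA hB
    exact (CRF2 a z hA hB).2.1
  · intro z hA hB hDB0
    have hv := (CRF2 a z hA hB).1
    have hu2 : (Fq (a+2)).eval z + 2*I*((Fq (a+1)).eval z) = 0 := by
      have := hA
      unfold A2p at this
      simp only [eval_add, eval_mul, eval_C] at this
      linear_combination this
    have hIDe := congrArg (eval z) (ID2_2 a)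
    rw [hDB0] at hIDe
    simp only [eval_mul, eval_pow, eval_add, eval_natCast, eval_one, eval_neg,
      eval_sub, eval_C, eval_ofNat] at hIDe
    have key : ((Fq (a+1)).eval z) * (2*I*(2*(a:ℂ)+3)) = 0 := by
      linear_combination -hIDe + ((a:ℂ)+2)^2 * hu2
    rcases mul_eq_zero.1 key with h1 | h1
    · exact hv h1
    · exact mul_ne_zero two_I_ne (cast_na_ne a) h1

open Complex in
lemma sqfree_A1p1 : IsCoprime (A1p 1) (derivative (A1p 1)) := by
  apply isCoprime_of_no_common_root _ _ (A1p_ne_zero 1)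
  intro z hA hA'
  have hB := evalB1_zero 1 z hA hA'
  obtain ⟨hv, hz, hp⟩ := CRF1 1 z hA hB
  norm_num at hz hp
  have hz2 : z = 2*I := by
    linear_combination (-(I)/5) * hz + z * Complex.I_sq
  have hv3 : (Fq 3).eval z = -5 := by
    rw [Fq_three, hz2]
    simp only [eval_sub, eval_pow, eval_X, eval_one]
    ring_nf
    rw [Complex.I_sq]
    ring
  rw [hv3, hz2] at hp
  ring_nf at hp
  rw [Complex.I_sq] at hp
  norm_num at hp

open Complex in
lemma sqfree_A1p2 : IsCoprime (A1p 2) (derivative (A1p 2)) := by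
  apply isCoprime_of_no_common_root _ _ (A1p_ne_zero 2)
  intro z hA hA'
  have hB := evalB1_zero 2 z hA hA'
  obtain ⟨hv, hz, hp⟩ := CRF1 2 z hA hB
  norm_num at hz hp
  have hz2 : z = 13/7*I := by
    linear_combination (-(I)/7) * hz + z * Complex.I_sq
  have hv4 : (Fq 4).eval z = 3471/343*I := by
    rw [Fq_four, hz2]
    simp only [eval_add, eval_neg, eval_mul, eval_pow, eval_X, eval_ofNat]
    ring_nf
    rw [show (I:ℂ)^3 = -I by rw [pow_succ, Complex.I_sq]; ring]
    ring
  rw [hv4, hz2] at hp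
  ring_nf at hp
  rw [Complex.I_sq] at hp
  norm_num at hp

open Complex in
lemma sqfree_A2p2 : IsCoprime (A2p 2) (derivative (A2p 2)) := by
  apply isCoprime_of_no_common_root _ _ (A2p_ne_zero 2)
  intro z hA hA'
  have hB := evalB2_zero 2 z hA hA'
  obtain ⟨hv, hz, hp⟩ := CRF2 2 z hA hB
  norm_num at hz hp
  have hz2 : z = 8/7*I := by
    linear_combination (-(I)/7) * hz + z * Complex.I_sq
  have hv3 : (Fq 3).eval z = -113/49 := by
    rw [Fq_three, hz2]
    simp only [eval_sub, eval_pow, eval_X, eval_one]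
    ring_nf
    rw [Complex.I_sq]
    ring
  rw [hv3, hz2] at hp
  ring_nf at hp
  rw [Complex.I_sq] at hp
  norm_num at hp

/-- closure of the (constant, 0) pairs under multiplication by the units. -/
inductive Cl (l : Polynomial ℂ) : Polynomial ℂ → Polynomial ℂ → Prop
  | base (e : ℂ) : Cl l (C e) 0
  | up {P Q : Polynomial ℂ} : Cl l P Q → Cl l (-Q) (P - l*Q)
  | down {P Q : Polynomial ℂ} : Cl l P Q → Cl l (Q - l*P) (-P)

lemma descent_const (l : Polynomial ℂ) (hl : 0 < l.natDegree) (ξ : ℂ)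
    (P Q : Polynomial ℂ) (hP : P.natDegree = 0) (hQ : Q.natDegree = 0)
    (heq : P^2 - l*P*Q + Q^2 = C ξ) : Cl l P Q := by
  have hPc : P = C (P.coeff 0) := eq_C_of_natDegree_eq_zero hP
  have hQc : Q = C (Q.coeff 0) := eq_C_of_natDegree_eq_zero hQ
  set p := P.coeff 0 with hp
  set q := Q.coeff 0 with hq
  have hkey : l * C (p*q) = C (p^2 + q^2 - ξ) := by
    rw [hPc, hQc] at heq
    rw [C_mul, C_sub, C_add, C_pow, C_pow]
    linear_combination -heq
  have hpq : p * q = 0 := by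
    by_contra hne
    have h1 : (l * C (p*q)).natDegree = l.natDegree := natDegree_mul_C hne
    rw [hkey, natDegree_C] at h1
    omega
  rcases mul_eq_zero.1 hpq with h | h
  · have hcl : Cl l (-(0 : Polynomial ℂ)) (C q - l*0) := Cl.up (Cl.base q)
    rw [hPc, hQc, h]
    simpa using hcl
  · have hcl : Cl l (C p) 0 := Cl.base p
    rw [hPc, hQc, h]
    simpa using hcl

/-- Descent: every solution of the Pell-type equation is in `Cl`. -/
lemma descent (l : Polynomial ℂ) (hl : 0 < l.natDegree) (ξ : ℂ) :
    ∀ N : ℕ, ∀ P Q : Polynomial ℂ, P.natDegree + Q.natDegree ≤ N →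
      P^2 - l*P*Q + Q^2 = C ξ → Cl l P Q := by
  intro N
  induction N with
  | zero =>
    intro P Q hdeg heq
    exact descent_const l hl ξ P Q (by omega) (by omega) heq
  | succ n ih =>
    intro P Q hdeg heq
    rcases Nat.lt_trichotomy P.natDegree Q.natDegree with hlt | heqd | hgt
    · -- replace Q by Q₂ = l*P - Q
      set Q₂ := l*P - Q with hQ₂
      have hQne : Q ≠ 0 := by
        intro h0
        rw [h0, natDegree_zero] at hlt
        omega
      have hkey : Q * Q₂ = P^2 - C ξ := by
        rw [hQ₂]
        linear_combination -heq
      have heq' : (-Q₂)^2 - l*(-Q₂)*(-P) + (-P)^2 = C ξ := by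
        rw [hQ₂]
        linear_combination heq
      have hmeas : (-Q₂).natDegree + (-P).natDegree ≤ n := by
        rw [natDegree_neg, natDegree_neg]
        by_cases h0 : Q₂ = 0
        · rw [h0, natDegree_zero]
          omega
        · have h1 : Q.natDegree + Q₂.natDegree = (P^2 - C ξ).natDegree := by
            rw [← natDegree_mul hQne h0, hkey]
          have h2 : (P^2 - C ξ).natDegree ≤ 2 * P.natDegree := by
            refine le_trans (natDegree_sub_le _ _) ?_
            simp [natDegree_pow, natDegree_C]
          omega
      have hcl := Cl.up (ih (-Q₂) (-P) hmeas heq')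
      have e1 : -(-P) = P := neg_neg P
      have e2 : (-Q₂) - l*(-P) = Q := by rw [hQ₂]; ring
      rwa [e1, e2] at hcl
    · -- equal degrees: contradiction
      by_cases h00 : P.natDegree = 0
      · exact descent_const l hl ξ P Q h00 (by omega) heq
      · exfalso
        have hPne : P ≠ 0 := fun h0 => h00 (by rw [h0, natDegree_zero])
        have hQne : Q ≠ 0 := by
          intro h0
          rw [h0, natDegree_zero] at heqd
          omega
        have heq2 : P^2 + Q^2 = C ξ + l*P*Q := by linear_combination heq
        have hlne : l ≠ 0 := fun h0 => by simp [h0] at hl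
        have hR : (C ξ + l*P*Q).natDegree = l.natDegree + P.natDegree + Q.natDegree := by
          rw [natDegree_add_eq_right_of_natDegree_lt, natDegree_mul (mul_ne_zero hlne hPne)
            hQne, natDegree_mul hlne hPne]
          rw [natDegree_mul (mul_ne_zero hlne hPne) hQne, natDegree_mul hlne hPne,
            natDegree_C]
          omega
        have hL : (P^2 + Q^2).natDegree ≤ 2 * P.natDegree := by
          refine le_trans (natDegree_add_le _ _) ?_
          simp only [natDegree_pow]
          omega
        rw [heq2, hR] at hL
        omega
    · -- replace P by P₂ = l*Q - P
      set P₂ := l*Q - P with hP₂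
      have hPne : P ≠ 0 := by
        intro h0
        rw [h0, natDegree_zero] at hgt
        omega
      have hkey : P * P₂ = Q^2 - C ξ := by
        rw [hP₂]
        linear_combination -heq
      have heq' : (-Q)^2 - l*(-Q)*(-P₂) + (-P₂)^2 = C ξ := by
        rw [hP₂]
        linear_combination heq
      have hmeas : (-Q).natDegree + (-P₂).natDegree ≤ n := by
        rw [natDegree_neg, natDegree_neg]
        by_cases h0 : P₂ = 0
        · rw [h0, natDegree_zero]
          omega
        · have h1 : P.natDegree + P₂.natDegree = (Q^2 - C ξ).natDegree := by
            rw [← natDegree_mul hPne h0, hkey]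
          have h2 : (Q^2 - C ξ).natDegree ≤ 2 * Q.natDegree := by
            refine le_trans (natDegree_sub_le _ _) ?_
            simp [natDegree_pow, natDegree_C]
          omega
      have hcl := Cl.down (ih (-Q) (-P₂) hmeas heq')
      have e1 : -(-Q) = Q := neg_neg Q
      have e2 : (-P₂) - l*(-Q) = P := by rw [hP₂]; ring
      rwa [e2, e1] at hcl

/-- composed sequence -/
def fc (l : Polynomial ℂ) (j : ℕ) : Polynomial ℂ := (Fq j).comp l

lemma fc_zero (l : Polynomial ℂ) : fc l 0 = 0 := by simp [fc]
lemma fc_one (l : Polynomial ℂ) : fc l 1 = 1 := by simp [fc]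
lemma fc_two (l : Polynomial ℂ) : fc l 2 = -l := by simp [fc, Fq_two]
lemma fc_three (l : Polynomial ℂ) : fc l 3 = l^2 - 1 := by
  simp [fc, Fq_three, sub_comp, pow_comp]

lemma fc_add_two (l : Polynomial ℂ) (j : ℕ) : fc l (j+2) = -(l * fc l (j+1)) - fc l j := by
  unfold fc
  rw [Fq_add_two]
  simp [sub_comp, neg_comp, mul_comp]

lemma fc_pell (l : Polynomial ℂ) (j : ℕ) :
    fc l j ^ 2 + l * fc l j * fc l (j+1) + fc l (j+1) ^ 2 = 1 := by
  have := congrArg (fun p : Polynomial ℂ => p.comp l) (Fq_pell j)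
  simpa [fc, add_comp, mul_comp, pow_comp, X_comp, one_comp] using this

/-- classification of `Cl` elements -/
lemma Cl_family (l : Polynomial ℂ) (P Q : Polynomial ℂ) (h : Cl l P Q) :
    ∃ (e : ℂ) (j : ℕ),
      (P = -(C e * fc l j) ∧ Q = C e * fc l (j+1)) ∨
      (P = C e * fc l (j+1) ∧ Q = -(C e * fc l j)) := by
  induction h with
  | base e =>
    refine ⟨e, 0, Or.inr ⟨?_, ?_⟩⟩
    · rw [fc_one]; try ring
    · rw [fc_zero]; try ring
  | @up P Q h ih =>
    obtain ⟨e, j, hfam | hfam⟩ := ih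
    · refine ⟨e, j+1, Or.inl ⟨?_, ?_⟩⟩
      · rw [hfam.2]; try ring
      · rw [hfam.1, hfam.2, fc_add_two]; try ring
    · rcases j with _ | j'
      · refine ⟨e, 0, Or.inl ⟨?_, ?_⟩⟩
        · rw [hfam.2, fc_zero]; try ring
        · rw [hfam.1, hfam.2, fc_zero]; try ring
      · refine ⟨e, j', Or.inr ⟨?_, ?_⟩⟩
        · rw [hfam.2]; try ring
        · rw [hfam.1, hfam.2, fc_add_two]; try ring
  | @down P Q h ih =>
    obtain ⟨e, j, hfam | hfam⟩ := ih
    · rcases j with _ | j'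
      · refine ⟨e, 0, Or.inr ⟨?_, ?_⟩⟩
        · rw [hfam.1, hfam.2, fc_zero]; try ring
        · rw [hfam.1, fc_zero]; try ring
      · refine ⟨e, j', Or.inl ⟨?_, ?_⟩⟩
        · rw [hfam.1, hfam.2, fc_add_two]; try ring
        · rw [hfam.1]; try ring
    · refine ⟨e, j+1, Or.inr ⟨?_, ?_⟩⟩
      · rw [hfam.1, hfam.2, fc_add_two]; try ring
      · rw [hfam.1]; try ring

open Complex in
lemma CmulC : (C (2*I) : Polynomial ℂ) * C (2*I) = -4 := by
  rw [← C_mul]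
  have : (2*I) * (2*I) = (-4:ℂ) := by linear_combination (4:ℂ)*Complex.I_sq
  rw [this]
  simp [map_neg, map_ofNat]

open Complex in
lemma hard1 (l : Polynomial ℂ) (hl : 0 < l.natDegree) (a : ℕ) (e : ℂ) (he : e ≠ 0)
    (x y : Polynomial ℂ) (hP : x^2 - y^2 = -(C e * fc l (a+2)))
    (hQ : x*y = C e * fc l (a+3)) : False := by
  set Ac := (A1p (a+1)).comp l with hAcdef
  set Ab := ((Fq (a+2) - C (2*I) * Fq (a+3)).comp l) with hAbdef
  have hAA : (A1p (a+1)) * (Fq (a+2) - C (2*I) * Fq (a+3)) =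
      Fq (a+2)^2 + 4 * Fq (a+3)^2 := by
    unfold A1p
    linear_combination (-((Fq (a+3))^2)) * CmulC
  have hcomp : Ac * Ab = fc l (a+2)^2 + 4 * fc l (a+3)^2 := by
    have h := congrArg (fun p : Polynomial ℂ => p.comp l) hAA
    simp only [mul_comp, add_comp, pow_comp, ofNat_comp] at h
    exact h
  have hsq : (x^2+y^2)^2 = (C e)^2 * (fc l (a+2)^2 + 4 * fc l (a+3)^2) := by
    linear_combination ((x^2-y^2) - C e * fc l (a+2)) * hP + (4*(x*y + C e * fc l (a+3))) * hQ
  have hC1 : C ((e^2)⁻¹) * (C e)^2 = 1 := by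
    rw [← map_pow, ← C_mul, inv_mul_cancel₀ (pow_ne_zero 2 he), map_one]
  have hprod : Ac * Ab = C ((e^2)⁻¹) * (x^2+y^2)^2 := by
    rw [hsq, ← mul_assoc, hC1, one_mul, hcomp]
  have hAc0 : Ac ≠ 0 := by
    intro h0
    have hd : (Ac).natDegree = (A1p (a+1)).natDegree * l.natDegree := natDegree_comp
    rw [h0, natDegree_zero, A1p_natDegree, show a+1+1 = a+2 from rfl] at hd
    have : 0 < (a+2) * l.natDegree := by positivity
    omega
  have hcop : IsCoprime Ac Ab := by
    apply isCoprime_of_no_common_root _ _ hAc0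
    intro t h1 h2
    rw [hAcdef, eval_comp] at h1
    rw [hAbdef, eval_comp] at h2
    set s := l.eval t with hs
    set u := (Fq (a+2)).eval s with hu0
    set v := (Fq (a+3)).eval s with hv0
    have hu : u + 2*I*v = 0 := by
      unfold A1p at h1
      simp only [eval_add, eval_mul, eval_C] at h1
      linear_combination h1
    have hv : u - 2*I*v = 0 := by
      simp only [eval_sub, eval_mul, eval_C] at h2
      linear_combination h2
    have huz : u = 0 := by linear_combination (1/2 : ℂ) * hu + (1/2 : ℂ) * hv
    have hvz : v = 0 := by
      have h3 : 2*I*v = 0 := by linear_combination (1/2 : ℂ) * hu - (1/2 : ℂ) * hv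
      rcases mul_eq_zero.1 h3 with h4 | h4
      · exact absurd h4 two_I_ne
      · exact h4
    have hp := congrArg (eval s) (Fq_pell (a+2))
    simp only [eval_add, eval_mul, eval_pow, eval_X, eval_one] at hp
    rw [show a+2+1 = a+3 from rfl, ← hu0, ← hv0, huz, hvz] at hp
    norm_num at hp
  obtain ⟨c', v', hc', hsq'⟩ := sq_of_coprime_poly Ac Ab (x^2+y^2) ((e^2)⁻¹)
    (inv_ne_zero (pow_ne_zero 2 he)) hcop hprod
  rcases a with _ | _ | a2
  · exact trick l hl (A1p 1) (by rw [A1p_natDegree]) sqfree_A1p1 c' v' hc' hsq'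
  · exact trick l hl (A1p 2) (by rw [A1p_natDegree]; omega) sqfree_A1p2 c' v' hc' hsq'
  · exact gen1 l hl (a2+3) (by omega) c' hc' v' hsq'

open Complex in
lemma hard2 (l : Polynomial ℂ) (hl : 0 < l.natDegree) (a : ℕ) (e : ℂ) (he : e ≠ 0)
    (x y : Polynomial ℂ) (hP : x^2 - y^2 = C e * fc l (a+4))
    (hQ : x*y = -(C e * fc l (a+3))) : False := by
  set Ac := (A2p (a+2)).comp l with hAcdef
  set Ab := ((Fq (a+4) - C (2*I) * Fq (a+3)).comp l) with hAbdef
  have hAA : (A2p (a+2)) * (Fq (a+4) - C (2*I) * Fq (a+3)) =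
      Fq (a+4)^2 + 4 * Fq (a+3)^2 := by
    unfold A2p
    linear_combination (-((Fq (a+3))^2)) * CmulC
  have hcomp : Ac * Ab = fc l (a+4)^2 + 4 * fc l (a+3)^2 := by
    have h := congrArg (fun p : Polynomial ℂ => p.comp l) hAA
    simp only [mul_comp, add_comp, pow_comp, ofNat_comp] at h
    exact h
  have hsq : (x^2+y^2)^2 = (C e)^2 * (fc l (a+4)^2 + 4 * fc l (a+3)^2) := by
    linear_combination ((x^2-y^2) + C e * fc l (a+4)) * hP + (4*(x*y - C e * fc l (a+3))) * hQ
  have hC1 : C ((e^2)⁻¹) * (C e)^2 = 1 := by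
    rw [← map_pow, ← C_mul, inv_mul_cancel₀ (pow_ne_zero 2 he), map_one]
  have hprod : Ac * Ab = C ((e^2)⁻¹) * (x^2+y^2)^2 := by
    rw [hsq, ← mul_assoc, hC1, one_mul, hcomp]
  have hAc0 : Ac ≠ 0 := by
    intro h0
    have hd : (Ac).natDegree = (A2p (a+2)).natDegree * l.natDegree := natDegree_comp
    rw [h0, natDegree_zero, A2p_natDegree, show a+2+1 = a+3 from rfl] at hd
    have : 0 < (a+3) * l.natDegree := by positivity
    omega
  have hcop : IsCoprime Ac Ab := by
    apply isCoprime_of_no_common_root _ _ hAc0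
    intro t h1 h2
    rw [hAcdef, eval_comp] at h1
    rw [hAbdef, eval_comp] at h2
    set s := l.eval t with hs
    set u := (Fq (a+3)).eval s with hu0
    set v := (Fq (a+4)).eval s with hv0
    have hu : v + 2*I*u = 0 := by
      unfold A2p at h1
      simp only [eval_add, eval_mul, eval_C] at h1
      linear_combination h1
    have hv : v - 2*I*u = 0 := by
      simp only [eval_sub, eval_mul, eval_C] at h2
      linear_combination h2
    have huz : v = 0 := by linear_combination (1/2 : ℂ) * hu + (1/2 : ℂ) * hv
    have hvz : u = 0 := by
      have h3 : 2*I*u = 0 := by linear_combination (1/2 : ℂ) * hu - (1/2 : ℂ) * hv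
      rcases mul_eq_zero.1 h3 with h4 | h4
      · exact absurd h4 two_I_ne
      · exact h4
    have hp := congrArg (eval s) (Fq_pell (a+3))
    simp only [eval_add, eval_mul, eval_pow, eval_X, eval_one] at hp
    rw [show a+3+1 = a+4 from rfl, ← hu0, ← hv0, huz, hvz] at hp
    norm_num at hp
  obtain ⟨c', v', hc', hsq'⟩ := sq_of_coprime_poly Ac Ab (x^2+y^2) ((e^2)⁻¹)
    (inv_ne_zero (pow_ne_zero 2 he)) hcop hprod
  rcases a with _ | a2
  · exact trick l hl (A2p 2) (by rw [A2p_natDegree]; omega) sqfree_A2p2 c' v' hc' hsq'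
  · exact gen2 l hl (a2+3) (by omega) c' hc' v' hsq'

lemma quartic_const (ξ : ℂ) (hξ : ξ ≠ 0) (x : Polynomial ℂ) (h : x^4 = C ξ) :
    ∃ ζ : ℂ, ζ ≠ 0 ∧ ζ^4 = ξ ∧ x = C ζ := by
  have hdx : x.natDegree = 0 := by
    have h1 : (x^4).natDegree = 4 * x.natDegree := natDegree_pow x 4
    rw [h, natDegree_C] at h1
    omega
  have hxc : x = C (x.coeff 0) := eq_C_of_natDegree_eq_zero hdx
  have hz4 : (x.coeff 0)^4 = ξ := by
    rw [hxc, ← C_pow] at h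
    exact C_injective h
  refine ⟨x.coeff 0, ?_, hz4, hxc⟩
  intro h0
  rw [h0] at hz4
  simp at hz4
  exact hξ hz4.symm

lemma eq_C_of_mul_eq_C (u v : Polynomial ℂ) (c : ℂ) (hc : c ≠ 0) (h : u * v = C c) :
    u.natDegree = 0 ∧ v.natDegree = 0 := by
  have hu : u ≠ 0 := by
    intro h0
    rw [h0, zero_mul] at h
    exact hc (by simpa using congrArg (eval 0) h.symm)
  have hv : v ≠ 0 := by
    intro h0
    rw [h0, mul_zero] at h
    exact hc (by simpa using congrArg (eval 0) h.symm)
  have := natDegree_mul hu hv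
  rw [h, natDegree_C] at this
  omega


end Aux19

open Polynomial Aux19 in
/-- Main theorem: for ξ ∈ ℂˣ and λ ∈ ℂ[T] non-constant, the solutions of
X(X-Y)(X+Y)(X-λY) + Y⁴ = ξ in ℂ[T] × ℂ[T] are exactly
(ζ,0), (0,ζ), (ζ,ζ), (-ζ,ζ), (ζλ,ζ), (-ζ,ζλ) with ζ⁴ = ξ. -/
theorem stmt_19 (ξ : ℂ) (hξ : ξ ≠ 0) (l : Polynomial ℂ) (hl : 0 < l.natDegree)
    (x y : Polynomial ℂ) :
    x ^ 4 - l * x ^ 3 * y - x ^ 2 * y ^ 2 + l * x * y ^ 3 + y ^ 4 = Polynomial.C ξ ↔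
    ∃ ζ : ℂ, ζ ≠ 0 ∧ ζ ^ 4 = ξ ∧
      ((x, y) = (Polynomial.C ζ, 0) ∨ (x, y) = (0, Polynomial.C ζ) ∨
       (x, y) = (Polynomial.C ζ, Polynomial.C ζ) ∨ (x, y) = (-Polynomial.C ζ, Polynomial.C ζ) ∨
       (x, y) = (Polynomial.C ζ * l, Polynomial.C ζ) ∨
       (x, y) = (-Polynomial.C ζ, Polynomial.C ζ * l)) := by
  constructor
  · intro heq
    have hN : (x^2 - y^2)^2 - l*(x^2-y^2)*(x*y) + (x*y)^2 = C ξ := by linear_combination heq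
    have hcl := descent l hl ξ ((x^2-y^2).natDegree + (x*y).natDegree) _ _ le_rfl hN
    obtain ⟨e, j, hfam⟩ := Cl_family l _ _ hcl
    have he2 : ξ = e^2 := by
      rcases hfam with ⟨hP, hQ⟩ | ⟨hP, hQ⟩ <;>
      · rw [hP, hQ] at hN
        have hpel := fc_pell l j
        have h3 : (C e)^2 * (fc l j ^2 + l * fc l j * fc l (j+1) + fc l (j+1)^2) = C ξ := by
          linear_combination hN
        rw [hpel, mul_one] at h3
        rw [← C_pow] at h3
        exact (C_injective h3).symm
    have he : e ≠ 0 := by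
      intro h0
      exact hξ (by rw [he2, h0]; ring)
    have hzeta4 : e^2 = ξ := he2.symm
    rcases hfam with ⟨hP, hQ⟩ | ⟨hP, hQ⟩
    · -- "up" family
      rcases j with _ | _ | a
      · -- j = 0 : x² = y², xy = e
        rw [fc_zero, mul_zero, neg_zero] at hP
        rw [fc_one, mul_one] at hQ
        have hxy : (x - y) * (x + y) = 0 := by linear_combination hP
        rcases mul_eq_zero.1 hxy with h1 | h1
        · have hxy' : x = y := by linear_combination h1
          rw [hxy'] at heq ⊢
          have h4 : y^4 = C ξ := by linear_combination heq
          obtain ⟨ζ, hζ0, hζ4, hyc⟩ := quartic_const ξ hξ y h4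
          exact ⟨ζ, hζ0, hζ4, Or.inr (Or.inr (Or.inl (by rw [hyc])))⟩
        · have hxy' : x = -y := by linear_combination h1
          rw [hxy'] at heq ⊢
          have h4 : y^4 = C ξ := by linear_combination heq
          obtain ⟨ζ, hζ0, hζ4, hyc⟩ := quartic_const ξ hξ y h4
          refine ⟨ζ, hζ0, hζ4, Or.inr (Or.inr (Or.inr (Or.inl ?_)))⟩
          rw [hyc]
      · -- j = 1 : impossible
        exfalso
        rw [fc_one, mul_one] at hP
        rw [fc_two] at hQ
        have hx0 : (x - y) * (x + y) = C (-e) := by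
          rw [map_neg]
          linear_combination hP
        obtain ⟨hd1, hd2⟩ := eq_C_of_mul_eq_C _ _ _ (neg_ne_zero.2 he) hx0
        have h2x : C (2:ℂ) * x = (x - y) + (x + y) := by
          rw [map_ofNat]
          ring
        have h2y : C (2:ℂ) * y = (x + y) - (x - y) := by
          rw [map_ofNat]
          ring
        have hdx : x.natDegree = 0 := by
          have e1 : (C (2:ℂ) * x).natDegree = x.natDegree := natDegree_C_mul two_ne_zero
          rw [h2x] at e1
          have e2 := natDegree_add_le (x - y) (x + y)
          omega
        have hdy : y.natDegree = 0 := by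
          have e1 : (C (2:ℂ) * y).natDegree = y.natDegree := natDegree_C_mul two_ne_zero
          rw [h2y] at e1
          have e2 := natDegree_sub_le (x + y) (x - y)
          omega
        have hdxy : (x*y).natDegree ≤ 0 := by
          have := natDegree_mul_le (p := x) (q := y)
          omega
        rw [hQ] at hdxy
        have : (C e * -l).natDegree = l.natDegree := by
          rw [show (C e * -l) = -(C e * l) by ring, natDegree_neg, natDegree_C_mul he]
        omega
      · -- j = a+2 : hard case
        exact absurd hQ (by
          intro hQ'
          exact hard1 l hl a e he x y hP hQ')
    · -- "down" family
      rcases j with _ | _ | _ | a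
      · -- j = 0 : xy = 0
        rw [fc_zero, mul_zero, neg_zero] at hQ
        rcases mul_eq_zero.1 hQ with h1 | h1
        · rw [h1] at heq ⊢
          have h4 : y^4 = C ξ := by linear_combination heq
          obtain ⟨ζ, hζ0, hζ4, hyc⟩ := quartic_const ξ hξ y h4
          exact ⟨ζ, hζ0, hζ4, Or.inr (Or.inl (by rw [hyc]))⟩
        · rw [h1] at heq ⊢
          have h4 : x^4 = C ξ := by linear_combination heq
          obtain ⟨ζ, hζ0, hζ4, hxc⟩ := quartic_const ξ hξ x h4
          exact ⟨ζ, hζ0, hζ4, Or.inl (by rw [hxc])⟩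
      · -- j = 1 : impossible
        exfalso
        rw [fc_one, mul_one] at hQ
        rw [fc_two] at hP
        have hx0 : x * y = C (-e) := by
          rw [map_neg]
          linear_combination hQ
        obtain ⟨hd1, hd2⟩ := eq_C_of_mul_eq_C _ _ _ (neg_ne_zero.2 he) hx0
        have hb : (x^2 - y^2).natDegree ≤ 0 := by
          have e1 := natDegree_sub_le (x^2) (y^2)
          have e2 : (x^2).natDegree = 2 * x.natDegree := natDegree_pow x 2
          have e3 : (y^2).natDegree = 2 * y.natDegree := natDegree_pow y 2
          omega
        rw [hP] at hb
        have : (C e * -l).natDegree = l.natDegree := by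
          rw [show (C e * -l : Polynomial ℂ) = -(C e * l) by ring, natDegree_neg,
            natDegree_C_mul he]
        omega
      · -- j = 2 : the λ-families
        rw [fc_three] at hP
        rw [fc_two] at hQ
        have hQ' : x * y = C e * l := by linear_combination hQ
        have key : (x^2 - C e * l^2) * (x^2 + C e) = 0 := by
          linear_combination (x^2) * hP + (x*y + C e * l) * hQ'
        rcases mul_eq_zero.1 key with h1 | h1
        · obtain ⟨α, hα⟩ := IsAlgClosed.exists_pow_nat_eq e (n := 2) (by norm_num)
          have hα0 : α ≠ 0 := by
            intro h0
            rw [h0] at hα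
            exact he (by rw [← hα]; ring)
          have hCe : C e = C α * C α := by
            rw [← C_mul]
            exact congrArg C (by rw [← hα]; ring)
          have hCα : (C α : Polynomial ℂ) ≠ 0 := fun h0 => hα0 (C_injective (by simpa using h0))
          have hl0 : l ≠ 0 := fun h0 => by simp [h0] at hl
          have hfac : (x - C α * l) * (x + C α * l) = 0 := by
            linear_combination h1 + (l^2) * hCe
          rcases mul_eq_zero.1 hfac with h2 | h2
          · have hx : x = C α * l := by linear_combination h2
            rw [hx] at hQ'
            have h3 : l * (C α * y - C e) = 0 := by linear_combination hQ'
            rcases mul_eq_zero.1 h3 with h4 | h4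
            · exact absurd h4 hl0
            · have h5 : C α * y = C α * C α := by rw [← hCe]; linear_combination h4
              have hy : y = C α := mul_left_cancel₀ hCα h5
              refine ⟨α, hα0, ?_, ?_⟩
              · have h6 : (α:ℂ)^4 = e^2 := by rw [← hα]; ring
                rw [h6]
                exact hzeta4
              · exact Or.inr (Or.inr (Or.inr (Or.inr (Or.inl (by rw [hx, hy])))))
          · have hx : x = -(C α * l) := by linear_combination h2
            rw [hx] at hQ'
            have h3 : l * (C α * y + C e) = 0 := by linear_combination -hQ'
            rcases mul_eq_zero.1 h3 with h4 | h4
            · exact absurd h4 hl0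
            · have h5 : C α * y = C α * (-(C α)) := by
                rw [show C α * (-(C α)) = -(C α * C α) by ring, ← hCe]
                linear_combination h4
              have hy : y = -(C α) := mul_left_cancel₀ hCα h5
              refine ⟨-α, neg_ne_zero.2 hα0, ?_, ?_⟩
              · have h6 : ((-α):ℂ)^4 = e^2 := by rw [← hα]; ring
                rw [h6]
                exact hzeta4
              · refine Or.inr (Or.inr (Or.inr (Or.inr (Or.inl ?_))))
                rw [hx, hy, map_neg, Prod.mk.injEq]
                constructor <;> ring
        · obtain ⟨β, hβ⟩ := IsAlgClosed.exists_pow_nat_eq (-e) (n := 2) (by norm_num)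
          have hβ0 : β ≠ 0 := by
            intro h0
            rw [h0] at hβ
            apply he
            have h5 : -e = 0 := by rw [← hβ]; ring
            exact neg_eq_zero.1 h5
          have heβ : e = -(β*β) := by linear_combination hβ
          have hCβ : (C β : Polynomial ℂ) ≠ 0 := fun h0 => hβ0 (C_injective (by simpa using h0))
          have hl0 : l ≠ 0 := fun h0 => by simp [h0] at hl
          have hCe : C e = -(C β * C β) := by
            rw [← C_mul, ← map_neg]
            exact congrArg C heβ
          have hfac : (x - C β) * (x + C β) = 0 := by
            linear_combination h1 - hCe
          rcases mul_eq_zero.1 hfac with h2 | h2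
          · have hx : x = C β := by linear_combination h2
            rw [hx] at hQ'
            have h3 : C β * (y + C β * l) = 0 := by linear_combination hQ' + l * hCe
            rcases mul_eq_zero.1 h3 with h4 | h4
            · exact absurd h4 hCβ
            · have hy : y = -(C β * l) := by linear_combination h4
              refine ⟨-β, neg_ne_zero.2 hβ0, ?_, ?_⟩
              · have h6 : ((-β):ℂ)^4 = e^2 := by rw [heβ]; ring
                rw [h6]
                exact hzeta4
              · refine Or.inr (Or.inr (Or.inr (Or.inr (Or.inr ?_))))
                rw [hx, hy, map_neg, Prod.mk.injEq]
                constructor <;> ring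
          · have hx : x = -(C β) := by linear_combination h2
            rw [hx] at hQ'
            have h3 : C β * (y - C β * l) = 0 := by linear_combination -hQ' - l * hCe
            rcases mul_eq_zero.1 h3 with h4 | h4
            · exact absurd h4 hCβ
            · have hy : y = C β * l := by linear_combination h4
              refine ⟨β, hβ0, ?_, ?_⟩
              · have h6 : (β:ℂ)^4 = e^2 := by rw [heβ]; ring
                rw [h6]
                exact hzeta4
              · refine Or.inr (Or.inr (Or.inr (Or.inr (Or.inr ?_))))
                rw [hx, hy, Prod.mk.injEq]
                constructor <;> ring
      · -- j = a+3 : hard case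
        exact absurd hQ (by
          intro hQ'
          exact hard2 l hl a e he x y hP hQ')
  · rintro ⟨ζ, hζ0, hζ4, hcase⟩
    have hC : (C ζ : Polynomial ℂ)^4 = C ξ := by rw [← C_pow, hζ4]
    rcases hcase with h | h | h | h | h | h <;>
    · rw [Prod.mk.injEq] at h
      obtain ⟨hx, hy⟩ := h
      subst hx
      subst hy
      linear_combination hC

end Aux19
end
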